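/- arXiv:2106.06888 — 4 statements merged into one kernel-verified Lean document; each statement's English description precedes it below -/
import Mathlib

section
/- There exists a 𝕂-algebra automorphism ψ_ı of the universal quasi-split ıquantum group Ũ^ı (a ring automorphism fixing 𝕂) such that ψ_ı(f(q)·1) = f(q^{-1})·1 for every f ∈ 𝕂(q), ψ_ı(k̃_i) = q_i^{c_{i,τi}} k̃_{τi}, and ψ_ı(B_i) = B_i for all i ∈ I; moreover ψ_ı ∘ ψ_ı = id (the bar involution of Ũ^ı). -/
/-!
The universal quasi-split ıquantum group `Ũ^ı` attached to a symmetrizable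
generalized Cartan matrix `c` with symmetrizer `ε` and an involution `τ`,
presented by generators `B_i, k̃_i, k̃_i⁻¹ (i ∈ I)` and the relations
(i)-(vi) of the Serre presentation (Chen-Lu-Wang), realized as a `RingQuot`
of the free algebra over `F = 𝕂(q)` on the generators.
-/

noncomputable section

/-- The quantum integer `[n]_v = (v^n - v^{-n})/(v - v^{-1})`. -/
def qint {K : Type*} [Field K] (v : RatFunc K) (n : ℤ) : RatFunc K :=
  (v ^ n - v ^ (-n)) / (v - v⁻¹)

/-- The quantum factorial `[m]_v! = [1]_v [2]_v ⋯ [m]_v`. -/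
def qfact {K : Type*} [Field K] (v : RatFunc K) (m : ℕ) : RatFunc K :=
  ∏ k ∈ Finset.range m, qint v ((k : ℤ) + 1)

/-- The q-Pochhammer symbol `(a; x)_n = ∏_{k=0}^{n-1} (1 - a x^k)`. -/
def qpoch {K : Type*} [Field K] (a x : RatFunc K) (n : ℕ) : RatFunc K :=
  ∏ k ∈ Finset.range n, (1 - a * x ^ k)

/-- Generators of the universal ıquantum group: `B i`, `k i`, and `kinv i`. -/
inductive Gen (I : Type*) where
  | B : I → Gen I
  | k : I → Gen I
  | kinv : I → Gen I

variable (K : Type*) [Field K] {I : Type*}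

/-- The free `𝕂(q)`-algebra on the generators. -/
abbrev FreeUi (K : Type*) [Field K] (I : Type*) := FreeAlgebra (RatFunc K) (Gen I)

/-- The generator `B_i` in the free algebra. -/
def bF (i : I) : FreeUi K I := FreeAlgebra.ι _ (Gen.B i)

/-- The generator `k̃_i` in the free algebra. -/
def kF (i : I) : FreeUi K I := FreeAlgebra.ι _ (Gen.k i)

/-- The generator `k̃_i⁻¹` in the free algebra. -/
def kiF (i : I) : FreeUi K I := FreeAlgebra.ι _ (Gen.kinv i)

variable (ε : I → ℕ)

/-- `q_i = q^{ε_i}`. -/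
def qi (i : I) : RatFunc K := (RatFunc.X : RatFunc K) ^ (ε i)

/-- The divided power `B_i^{(n)} = B_i^n/[n]_{q_i}!` in the free algebra. -/
def dpF (i : I) (n : ℕ) : FreeUi K I :=
  (qfact (qi K ε i) n)⁻¹ • (bF K i) ^ n

/-- The ıdivided power `B_{i,p̄}^{(m)}` (for `τ i = i`) in the free algebra:
`B_{i,1̄}^{(2k+1)} = (1/[2k+1]!) B_i ∏_{j=1}^{k} (B_i² − q_i k̃_i [2j−1]²)`,
`B_{i,1̄}^{(2k)} = (1/[2k]!) ∏_{j=1}^{k} (B_i² − q_i k̃_i [2j−1]²)`,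
`B_{i,0̄}^{(2k+1)} = (1/[2k+1]!) B_i ∏_{j=1}^{k} (B_i² − q_i k̃_i [2j]²)`,
`B_{i,0̄}^{(2k)} = (1/[2k]!) ∏_{j=1}^{k} (B_i² − q_i k̃_i [2j−2]²)`. -/
def idpF (i : I) (p : ZMod 2) (m : ℕ) : FreeUi K I :=
  (qfact (qi K ε i) m)⁻¹ •
    ((if m % 2 = 1 then bF K i else 1) *
      ((List.range (m / 2)).map fun j =>
        (bF K i) ^ 2 -
          (qi K ε i * (qint (qi K ε i)
            (if p = 1 then 2 * (j : ℤ) + 1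
              else if m % 2 = 1 then 2 * (j : ℤ) + 2 else 2 * (j : ℤ))) ^ 2) •
          kF K i).prod)

/-- The defining relations (i)-(vi) of the Serre presentation of `Ũ^ı`. -/
inductive iRel (c : I → I → ℤ) (τ : I → I) : FreeUi K I → FreeUi K I → Prop where
  /-- `k̃_i k̃_i⁻¹ = 1` -/
  | k_kinv (i : I) : iRel c τ (kF K i * kiF K i) 1
  /-- `k̃_i⁻¹ k̃_i = 1` -/
  | kinv_k (i : I) : iRel c τ (kiF K i * kF K i) 1
  /-- `k̃_i k̃_ℓ = k̃_ℓ k̃_i` -/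
  | k_k (i ℓ : I) : iRel c τ (kF K i * kF K ℓ) (kF K ℓ * kF K i)
  /-- `k̃_ℓ B_i = q_i^{c_{τℓ,i} − c_{ℓ,i}} B_i k̃_ℓ` -/
  | k_B (ℓ i : I) :
      iRel c τ (kF K ℓ * bF K i)
        ((qi K ε i ^ (c (τ ℓ) i - c ℓ i)) • (bF K i * kF K ℓ))
  /-- `B_i B_j = B_j B_i` when `c_{ij} = 0` and `j ≠ τ i` -/
  | B_B (i j : I) (h0 : c i j = 0) (hτ : j ≠ τ i) :
      iRel c τ (bF K i * bF K j) (bF K j * bF K i)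
  /-- quantum Serre relation, for `i ≠ j`, `j ≠ τ i`, `i ≠ τ i` -/
  | serre (i j : I) (hij : i ≠ j) (h1 : j ≠ τ i) (h2 : i ≠ τ i) :
      iRel c τ
        (∑ n ∈ Finset.range ((1 - c i j).toNat + 1),
          ((-1 : RatFunc K) ^ n) •
            (dpF K ε i n * bF K j * dpF K ε i ((1 - c i j).toNat - n))) 0
  /-- the BKL relation, for `τ i ≠ i` -/
  | bkl (i : I) (h : τ i ≠ i) :
      iRel c τ
        (∑ n ∈ Finset.range ((1 - c i (τ i)).toNat + 1),
          ((-1 : RatFunc K) ^ ((n : ℤ) + c i (τ i))) •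
            (dpF K ε i n * bF K (τ i) * dpF K ε i ((1 - c i (τ i)).toNat - n)))
        ((qi K ε i - (qi K ε i)⁻¹)⁻¹ •
          (((qi K ε i) ^ (c i (τ i)) *
              qpoch ((qi K ε i) ^ (-2 : ℤ)) ((qi K ε i) ^ (-2 : ℤ))
                (-(c i (τ i))).toNat) •
              (dpF K ε i (-(c i (τ i))).toNat * kF K i)
            - (qpoch ((qi K ε i) ^ (2 : ℤ)) ((qi K ε i) ^ (2 : ℤ))
                (-(c i (τ i))).toNat) •
              (dpF K ε i (-(c i (τ i))).toNat * kF K (τ i))))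
  /-- the ıSerre relation, for `τ i = i`, `j ≠ i`, and each parity `p` -/
  | iserre (i j : I) (h : τ i = i) (hij : j ≠ i) (p : ZMod 2) :
      iRel c τ
        (∑ r ∈ Finset.range ((1 - c i j).toNat + 1),
          ((-1 : RatFunc K) ^ r) •
            (idpF K ε i p r * bF K j *
              idpF K ε i (p + (c i j : ZMod 2)) ((1 - c i j).toNat - r))) 0

/-- The universal quasi-split ıquantum group `Ũ^ı`, as the quotient of the free
algebra by the defining relations. -/
abbrev Ui (c : I → I → ℤ) (τ : I → I) := RingQuot (iRel K ε c τ)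

/-- The generator `B_i` of `Ũ^ı`. -/
def bU (c : I → I → ℤ) (τ : I → I) (i : I) : Ui K ε c τ :=
  RingQuot.mkAlgHom (RatFunc K) (iRel K ε c τ) (bF K i)

/-- The generator `k̃_i` of `Ũ^ı`. -/
def kU (c : I → I → ℤ) (τ : I → I) (i : I) : Ui K ε c τ :=
  RingQuot.mkAlgHom (RatFunc K) (iRel K ε c τ) (kF K i)

/-- For `f ∈ 𝕂(q)`, the rational function `f(q⁻¹)`, i.e. `f` evaluated at `q⁻¹`. -/
def barF (f : RatFunc K) : RatFunc K :=
  Polynomial.aeval (RatFunc.X : RatFunc K)⁻¹ f.num /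
    Polynomial.aeval (RatFunc.X : RatFunc K)⁻¹ f.denom

namespace IQGBar

section Sigma

variable (K : Type*) [Field K]

lemma aeval_X_eq (p : Polynomial K) :
    Polynomial.aeval (RatFunc.X : RatFunc K) p = algebraMap (Polynomial K) (RatFunc K) p := by
  have h := Polynomial.aeval_algHom_apply
    (IsScalarTower.toAlgHom K (Polynomial K) (RatFunc K)) Polynomial.X p
  rw [Polynomial.aeval_X_left_apply] at h
  rw [show (IsScalarTower.toAlgHom K (Polynomial K) (RatFunc K)) Polynomial.X
      = (RatFunc.X : RatFunc K) from RatFunc.algebraMap_X] at h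
  exact h

lemma Xinv_trans : Transcendental K ((RatFunc.X : RatFunc K)⁻¹) := by
  intro h
  have hX : Transcendental K (RatFunc.X : RatFunc K) := by
    rw [transcendental_iff]
    intro p hp
    apply RatFunc.algebraMap_injective K
    rw [map_zero, ← aeval_X_eq]
    exact hp
  exact hX (IsAlgebraic.inv_iff.mp h)

/-- The endomorphism `q ↦ q⁻¹` of `𝕂(q)`, as a ring hom. -/
noncomputable def σb : RatFunc K →+* RatFunc K :=
  IsFractionRing.lift
    (g := ((Polynomial.aeval ((RatFunc.X : RatFunc K)⁻¹)).toRingHom :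
      Polynomial K →+* RatFunc K))
    (by
      rw [injective_iff_map_eq_zero]
      intro p hp
      exact (transcendental_iff.mp (Xinv_trans K)) p hp)

lemma σb_poly (p : Polynomial K) :
    σb K (algebraMap (Polynomial K) (RatFunc K) p) =
      Polynomial.aeval ((RatFunc.X : RatFunc K)⁻¹) p :=
  IsFractionRing.lift_algebraMap _ _

lemma σb_X : σb K (RatFunc.X : RatFunc K) = (RatFunc.X : RatFunc K)⁻¹ := by
  conv_lhs => rw [← RatFunc.algebraMap_X, σb_poly, Polynomial.aeval_X]

lemma σb_barF (f : RatFunc K) : σb K f = barF K f := by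
  conv_lhs => rw [← RatFunc.num_div_denom f]
  rw [map_div₀, σb_poly, σb_poly, barF]

lemma σb_σb (f : RatFunc K) : σb K (σb K f) = f := by
  have h : (σb K).comp (σb K) = RingHom.id (RatFunc K) := by
    apply IsLocalization.ringHom_ext (nonZeroDivisors (Polynomial K))
    apply Polynomial.ringHom_ext
    · intro a
      have h1 : algebraMap (Polynomial K) (RatFunc K) (Polynomial.C a)
          = algebraMap K (RatFunc K) a := by
        rw [IsScalarTower.algebraMap_apply K (Polynomial K) (RatFunc K) a,
          Polynomial.algebraMap_apply]
        simp
      simp only [RingHom.coe_comp, Function.comp_apply, RingHom.id_apply]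
      have h2 : σb K (algebraMap K (RatFunc K) a) = algebraMap K (RatFunc K) a := by
        rw [← h1, σb_poly, Polynomial.aeval_C]
        exact h1.symm
      rw [h1, h2, h2]
    · simp only [RingHom.coe_comp, Function.comp_apply, RingHom.id_apply]
      rw [RatFunc.algebraMap_X, σb_X, map_inv₀, σb_X, inv_inv]
  exact DFunLike.congr_fun h f

end Sigma

section Phi

variable (K : Type*) [Field K] {I : Type*} (c : I → I → ℤ) (ε : I → ℕ) (τ : I → I)

lemma qi_ne_zero (i : I) : qi K ε i ≠ 0 :=
  pow_ne_zero _ RatFunc.X_ne_zero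

lemma σb_qi (i : I) : σb K (qi K ε i) = (qi K ε i)⁻¹ := by
  unfold qi
  rw [map_pow, σb_X, inv_pow]

lemma σb_qint (i : I) (n : ℤ) :
    σb K (qint (qi K ε i) n) = qint (qi K ε i) n := by
  unfold qint
  rw [map_div₀, map_sub, map_sub, map_zpow₀, map_zpow₀, map_inv₀,
    σb_qi, inv_inv, inv_zpow', inv_zpow', neg_neg,
    ← neg_sub ((qi K ε i) ^ n), ← neg_sub (qi K ε i), neg_div_neg_eq]

lemma σb_qfact (i : I) (n : ℕ) :
    σb K (qfact (qi K ε i) n) = qfact (qi K ε i) n := by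
  unfold qfact
  rw [map_prod]
  exact Finset.prod_congr rfl fun k _ => σb_qint K ε i _

lemma σb_qpoch_neg (i : I) (m : ℕ) :
    σb K (qpoch ((qi K ε i) ^ (-2 : ℤ)) ((qi K ε i) ^ (-2 : ℤ)) m) =
      qpoch ((qi K ε i) ^ (2 : ℤ)) ((qi K ε i) ^ (2 : ℤ)) m := by
  unfold qpoch
  rw [map_prod]
  refine Finset.prod_congr rfl fun k _ => ?_
  rw [map_sub, map_one, map_mul, map_pow, map_zpow₀, σb_qi, inv_zpow', neg_neg]

lemma σb_qpoch_pos (i : I) (m : ℕ) :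
    σb K (qpoch ((qi K ε i) ^ (2 : ℤ)) ((qi K ε i) ^ (2 : ℤ)) m) =
      qpoch ((qi K ε i) ^ (-2 : ℤ)) ((qi K ε i) ^ (-2 : ℤ)) m := by
  unfold qpoch
  rw [map_prod]
  refine Finset.prod_congr rfl fun k _ => ?_
  rw [map_sub, map_one, map_mul, map_pow, map_zpow₀, σb_qi, inv_zpow']

/-- The image of the generators under the bar involution. -/
noncomputable def gmap : Gen I → FreeUi K I
  | Gen.B i => bF K i
  | Gen.k i => (qi K ε i ^ (c i (τ i))) • kF K (τ i)
  | Gen.kinv i => (qi K ε i ^ (-(c i (τ i)))) • kiF K (τ i)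

end Phi

/-- Type synonym for the free algebra, carrying the `σb`-twisted algebra structure. -/
def TwUi (K : Type*) [Field K] (I : Type*) : Type _ := FreeUi K I

instance (K : Type*) [Field K] (I : Type*) : Ring (TwUi K I) :=
  inferInstanceAs (Ring (FreeAlgebra (RatFunc K) (Gen I)))

noncomputable instance (K : Type*) [Field K] (I : Type*) :
    Algebra (RatFunc K) (TwUi K I) :=
  ((algebraMap (RatFunc K) (FreeUi K I)).comp (σb K)).toAlgebra'
    (fun r x => by
      simp only [RingHom.coe_comp, Function.comp_apply]
      exact Algebra.commutes _ x)

section Phi2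

variable (K : Type*) [Field K] {I : Type*} (c : I → I → ℤ) (ε : I → ℕ) (τ : I → I)

/-- The bar involution on the free algebra, as an algebra map to the twisted algebra. -/
noncomputable def ΦA : FreeUi K I →ₐ[RatFunc K] TwUi K I :=
  FreeAlgebra.lift (RatFunc K) (gmap K c ε τ : Gen I → TwUi K I)

/-- The bar involution on the free algebra, as a ring hom. -/
noncomputable def Φ : FreeUi K I →+* FreeUi K I :=
  (ΦA K c ε τ).toRingHom

lemma Φ_ι (x : Gen I) :
    Φ K c ε τ (FreeAlgebra.ι (RatFunc K) x) = gmap K c ε τ x :=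
  FreeAlgebra.lift_ι_apply (R := RatFunc K) (A := TwUi K I) (gmap K c ε τ) x

lemma Φ_algebraMap (r : RatFunc K) :
    Φ K c ε τ (algebraMap (RatFunc K) (FreeUi K I) r) =
      algebraMap (RatFunc K) (FreeUi K I) (σb K r) :=
  (ΦA K c ε τ).commutes r

lemma Φ_smul (r : RatFunc K) (x : FreeUi K I) :
    Φ K c ε τ (r • x) = σb K r • Φ K c ε τ x := by
  rw [Algebra.smul_def, map_mul, Φ_algebraMap, ← Algebra.smul_def]

lemma Φ_bF (i : I) : Φ K c ε τ (bF K i) = bF K i := Φ_ι K c ε τ (Gen.B i)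

lemma Φ_kF (i : I) :
    Φ K c ε τ (kF K i) = (qi K ε i ^ (c i (τ i))) • kF K (τ i) := Φ_ι K c ε τ (Gen.k i)

lemma Φ_kiF (i : I) :
    Φ K c ε τ (kiF K i) = (qi K ε i ^ (-(c i (τ i)))) • kiF K (τ i) := Φ_ι K c ε τ (Gen.kinv i)

lemma Φ_dpF (i : I) (n : ℕ) : Φ K c ε τ (dpF K ε i n) = dpF K ε i n := by
  unfold dpF
  rw [Φ_smul, map_pow, Φ_bF, map_inv₀, σb_qfact]

lemma Φ_idpF (i : I) (h : τ i = i) (hcii : c i i = 2) (p : ZMod 2) (m : ℕ) :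
    Φ K c ε τ (idpF K ε i p m) = idpF K ε i p m := by
  unfold idpF
  rw [Φ_smul, map_inv₀, σb_qfact, map_mul, map_list_prod, List.map_map]
  congr 2
  · split_ifs with hm
    · exact Φ_bF K c ε τ i
    · exact map_one _
  · congr 1
    apply List.map_congr_left
    intro j hj
    simp only [Function.comp_apply]
    rw [map_sub, map_pow, Φ_bF, Φ_smul, Φ_kF, h, hcii, smul_smul, map_mul, σb_qi,
      map_pow, σb_qint]
    have hq := qi_ne_zero K ε i
    have hs : ∀ t : RatFunc K,
        (qi K ε i)⁻¹ * t ^ 2 * qi K ε i ^ (2 : ℤ) = qi K ε i * t ^ 2 := by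
      intro t
      rw [zpow_two]
      field_simp
    rw [hs]

lemma Φ_rel (hcii : ∀ i, c i i = 2) (hτ : ∀ i, τ (τ i) = i)
    (hτc : ∀ i j, c (τ i) (τ j) = c i j) (hτε : ∀ i, ε (τ i) = ε i) :
    ∀ ⦃x y : FreeUi K I⦄, iRel K ε c τ x y →
      RingQuot.mkAlgHom (RatFunc K) (iRel K ε c τ) (Φ K c ε τ x) =
        RingQuot.mkAlgHom (RatFunc K) (iRel K ε c τ) (Φ K c ε τ y) := by
  intro x y hxy
  have hca : ∀ i, c (τ i) i = c i (τ i) := fun i => by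
    have h := hτc i (τ i); rwa [hτ i] at h
  have hqτ : ∀ i, qi K ε (τ i) = qi K ε i := fun i => by unfold qi; rw [hτε]
  have hq0 : ∀ i : I, qi K ε i ≠ 0 := qi_ne_zero K ε
  cases hxy with
  | k_kinv i =>
      have h1 : Φ K c ε τ (kF K i * kiF K i) = kF K (τ i) * kiF K (τ i) := by
        rw [map_mul, Φ_kF, Φ_kiF, smul_mul_smul_comm, ← zpow_add₀ (hq0 i),
          add_neg_cancel, zpow_zero, one_smul]
      rw [map_one, h1]
      exact RingQuot.mkAlgHom_rel _ (iRel.k_kinv (τ i))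
  | kinv_k i =>
      have h1 : Φ K c ε τ (kiF K i * kF K i) = kiF K (τ i) * kF K (τ i) := by
        rw [map_mul, Φ_kF, Φ_kiF, smul_mul_smul_comm, ← zpow_add₀ (hq0 i),
          neg_add_cancel, zpow_zero, one_smul]
      rw [map_one, h1]
      exact RingQuot.mkAlgHom_rel _ (iRel.kinv_k (τ i))
  | k_k i ℓ =>
      have h1 : ∀ i ℓ : I, Φ K c ε τ (kF K i * kF K ℓ)
          = (qi K ε i ^ (c i (τ i)) * qi K ε ℓ ^ (c ℓ (τ ℓ))) •
            (kF K (τ i) * kF K (τ ℓ)) := by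
        intro i ℓ
        rw [map_mul, Φ_kF, Φ_kF, smul_mul_smul_comm]
      rw [h1, h1, map_smul, map_smul, mul_comm (qi K ε i ^ (c i (τ i))),
        RingQuot.mkAlgHom_rel (RatFunc K) (iRel.k_k (τ i) (τ ℓ))]
  | k_B ℓ i =>
      have h1 : Φ K c ε τ (kF K ℓ * bF K i)
          = qi K ε ℓ ^ (c ℓ (τ ℓ)) • (kF K (τ ℓ) * bF K i) := by
        rw [map_mul, Φ_kF, Φ_bF, smul_mul_assoc]
      have h2 : Φ K c ε τ ((qi K ε i ^ (c (τ ℓ) i - c ℓ i)) • (bF K i * kF K ℓ))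
          = (qi K ε i ^ (c ℓ i - c (τ ℓ) i) * qi K ε ℓ ^ (c ℓ (τ ℓ))) •
            (bF K i * kF K (τ ℓ)) := by
        rw [Φ_smul, map_mul, Φ_bF, Φ_kF, map_zpow₀, σb_qi, inv_zpow', neg_sub,
          mul_smul_comm, smul_smul]
      rw [h1, h2, map_smul, map_smul,
        RingQuot.mkAlgHom_rel (RatFunc K) (iRel.k_B (τ ℓ) i), hτ ℓ,
        map_smul, smul_smul, mul_comm]
  | B_B i j h0 hτij =>
      have h1 : ∀ i j : I, Φ K c ε τ (bF K i * bF K j) = bF K i * bF K j := by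
        intro i j
        rw [map_mul, Φ_bF, Φ_bF]
      rw [h1, h1]
      exact RingQuot.mkAlgHom_rel _ (iRel.B_B i j h0 hτij)
  | serre i j hij h1 h2 =>
      have hS : Φ K c ε τ (∑ n ∈ Finset.range ((1 - c i j).toNat + 1),
          ((-1 : RatFunc K) ^ n) •
            (dpF K ε i n * bF K j * dpF K ε i ((1 - c i j).toNat - n)))
          = ∑ n ∈ Finset.range ((1 - c i j).toNat + 1),
          ((-1 : RatFunc K) ^ n) •
            (dpF K ε i n * bF K j * dpF K ε i ((1 - c i j).toNat - n)) := by
        rw [map_sum (Φ K c ε τ) _ _]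
        refine Finset.sum_congr rfl fun n _ => ?_
        rw [Φ_smul, map_mul, map_mul, Φ_dpF, Φ_dpF, Φ_bF, map_pow, map_neg, map_one]
      rw [hS]
      have h := RingQuot.mkAlgHom_rel (RatFunc K) (s := iRel K ε c τ) (iRel.serre i j hij h1 h2)
      simpa using h
  | bkl i hne =>
      have hL : Φ K c ε τ (∑ n ∈ Finset.range ((1 - c i (τ i)).toNat + 1),
          ((-1 : RatFunc K) ^ ((n : ℤ) + c i (τ i))) •
            (dpF K ε i n * bF K (τ i) * dpF K ε i ((1 - c i (τ i)).toNat - n)))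
          = ∑ n ∈ Finset.range ((1 - c i (τ i)).toNat + 1),
          ((-1 : RatFunc K) ^ ((n : ℤ) + c i (τ i))) •
            (dpF K ε i n * bF K (τ i) * dpF K ε i ((1 - c i (τ i)).toNat - n)) := by
        rw [map_sum]
        refine Finset.sum_congr rfl fun n _ => ?_
        rw [Φ_smul, map_mul, map_mul, Φ_dpF, Φ_dpF, Φ_bF, map_zpow₀, map_neg, map_one]
      rw [hL]
      have hR : Φ K c ε τ ((qi K ε i - (qi K ε i)⁻¹)⁻¹ •
          (((qi K ε i) ^ (c i (τ i)) *
              qpoch ((qi K ε i) ^ (-2 : ℤ)) ((qi K ε i) ^ (-2 : ℤ))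
                (-(c i (τ i))).toNat) •
              (dpF K ε i (-(c i (τ i))).toNat * kF K i)
            - (qpoch ((qi K ε i) ^ (2 : ℤ)) ((qi K ε i) ^ (2 : ℤ))
                (-(c i (τ i))).toNat) •
              (dpF K ε i (-(c i (τ i))).toNat * kF K (τ i))))
          = (qi K ε i - (qi K ε i)⁻¹)⁻¹ •
          (((qi K ε i) ^ (c i (τ i)) *
              qpoch ((qi K ε i) ^ (-2 : ℤ)) ((qi K ε i) ^ (-2 : ℤ))
                (-(c i (τ i))).toNat) •
              (dpF K ε i (-(c i (τ i))).toNat * kF K i)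
            - (qpoch ((qi K ε i) ^ (2 : ℤ)) ((qi K ε i) ^ (2 : ℤ))
                (-(c i (τ i))).toNat) •
              (dpF K ε i (-(c i (τ i))).toNat * kF K (τ i))) := by
        rw [Φ_smul, map_sub, Φ_smul, Φ_smul, map_mul (Φ K c ε τ), map_mul (Φ K c ε τ),
          Φ_dpF, Φ_kF, Φ_kF, hτ i, hca i, hqτ i]
        rw [mul_smul_comm, mul_smul_comm, smul_smul, smul_smul]
        rw [map_inv₀, map_sub, map_inv₀, map_mul (σb K), map_zpow₀,
          σb_qpoch_neg, σb_qpoch_pos, σb_qi, inv_inv, inv_zpow']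
        have e4 : qi K ε i ^ (-(c i (τ i))) *
            qpoch ((qi K ε i) ^ (2 : ℤ)) ((qi K ε i) ^ (2 : ℤ)) (-(c i (τ i))).toNat *
            qi K ε i ^ (c i (τ i))
            = qpoch ((qi K ε i) ^ (2 : ℤ)) ((qi K ε i) ^ (2 : ℤ)) (-(c i (τ i))).toNat := by
          rw [mul_right_comm, ← zpow_add₀ (hq0 i), neg_add_cancel, zpow_zero, one_mul]
        have e5 : ((qi K ε i)⁻¹ - qi K ε i)⁻¹ = -(qi K ε i - (qi K ε i)⁻¹)⁻¹ := by
          rw [← inv_neg, neg_sub]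
        rw [e4, e5, neg_smul, ← smul_neg, neg_sub,
          mul_comm (qpoch ((qi K ε i) ^ (-2 : ℤ)) ((qi K ε i) ^ (-2 : ℤ))
            (-(c i (τ i))).toNat) ((qi K ε i) ^ (c i (τ i)))]
      rw [hR]
      exact RingQuot.mkAlgHom_rel _ (iRel.bkl i hne)
  | iserre i j h hij p =>
      have hS : Φ K c ε τ (∑ r ∈ Finset.range ((1 - c i j).toNat + 1),
          ((-1 : RatFunc K) ^ r) •
            (idpF K ε i p r * bF K j *
              idpF K ε i (p + (c i j : ZMod 2)) ((1 - c i j).toNat - r)))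
          = ∑ r ∈ Finset.range ((1 - c i j).toNat + 1),
          ((-1 : RatFunc K) ^ r) •
            (idpF K ε i p r * bF K j *
              idpF K ε i (p + (c i j : ZMod 2)) ((1 - c i j).toNat - r)) := by
        rw [map_sum (Φ K c ε τ) _ _]
        refine Finset.sum_congr rfl fun r _ => ?_
        rw [Φ_smul, map_mul, map_mul, Φ_idpF K c ε τ i h (hcii i),
          Φ_idpF K c ε τ i h (hcii i), Φ_bF, map_pow, map_neg, map_one]
      rw [hS]
      have hrel := RingQuot.mkAlgHom_rel (RatFunc K) (s := iRel K ε c τ) (iRel.iserre i j h hij p)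
      simpa using hrel

lemma ΦΦ (hτ : ∀ i, τ (τ i) = i) (hτc : ∀ i j, c (τ i) (τ j) = c i j)
    (hτε : ∀ i, ε (τ i) = ε i) :
    ∀ x : FreeUi K I, Φ K c ε τ (Φ K c ε τ x) = x := by
  have hca : ∀ i, c (τ i) i = c i (τ i) := fun i => by
    have h := hτc i (τ i); rwa [hτ i] at h
  have hqτ : ∀ i, qi K ε (τ i) = qi K ε i := fun i => by unfold qi; rw [hτε]
  intro x
  induction x using FreeAlgebra.induction with
  | grade0 r => rw [Φ_algebraMap, Φ_algebraMap, σb_σb]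
  | grade1 g =>
      cases g with
      | B i =>
          rw [show FreeAlgebra.ι (RatFunc K) (Gen.B i) = bF K i from rfl, Φ_bF, Φ_bF]
      | k i =>
          rw [show FreeAlgebra.ι (RatFunc K) (Gen.k i) = kF K i from rfl, Φ_kF, Φ_smul,
            Φ_kF, hτ i, hca i, hqτ i, smul_smul, map_zpow₀, σb_qi, inv_zpow',
            ← zpow_add₀ (qi_ne_zero K ε i), neg_add_cancel, zpow_zero, one_smul]
      | kinv i =>
          rw [show FreeAlgebra.ι (RatFunc K) (Gen.kinv i) = kiF K i from rfl, Φ_kiF, Φ_smul,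
            Φ_kiF, hτ i, hca i, hqτ i, smul_smul, map_zpow₀, σb_qi, inv_zpow', neg_neg,
            ← zpow_add₀ (qi_ne_zero K ε i), add_neg_cancel, zpow_zero, one_smul]
  | mul a b ha hb => rw [map_mul, map_mul, ha, hb]
  | add a b ha hb => rw [map_add, map_add, ha, hb]

end Phi2

end IQGBar

/-- (Lemma 2.4(a): the bar involution `ψ_ı` of `Ũ^ı`.) There is a ring automorphism
`ψ_ı` of `Ũ^ı` fixing `𝕂`, with `ψ_ı(f(q)·1) = f(q⁻¹)·1` for every `f ∈ 𝕂(q)`,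
`ψ_ı(k̃_i) = q_i^{c_{i,τi}} k̃_{τi}`, `ψ_ı(B_i) = B_i`, and `ψ_ı ∘ ψ_ı = id`. -/
theorem stmt0 {K : Type*} [Field K] [CharZero K]
    {I : Type*} [Fintype I] [DecidableEq I]
    (c : I → I → ℤ) (ε : I → ℕ) (τ : I → I)
    (hcii : ∀ i, c i i = 2)
    (hcneg : ∀ i j, i ≠ j → c i j ≤ 0)
    (hczero : ∀ i j, c i j = 0 ↔ c j i = 0)
    (hε : ∀ i, 0 < ε i)
    (hsym : ∀ i j, (ε i : ℤ) * c i j = (ε j : ℤ) * c j i)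
    (hτ : ∀ i, τ (τ i) = i)
    (hτc : ∀ i j, c (τ i) (τ j) = c i j)
    (hτε : ∀ i, ε (τ i) = ε i) :
    ∃ ψ : Ui K ε c τ ≃+* Ui K ε c τ,
      (∀ f : RatFunc K,
          ψ (algebraMap (RatFunc K) (Ui K ε c τ) f)
            = algebraMap (RatFunc K) (Ui K ε c τ) (barF K f)) ∧
      (∀ i : I, ψ (kU K ε c τ i) = (qi K ε i ^ (c i (τ i))) • kU K ε c τ (τ i)) ∧
      (∀ i : I, ψ (bU K ε c τ i) = bU K ε c τ i) ∧
      (∀ x : Ui K ε c τ, ψ (ψ x) = x) := by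
  have key : ∀ ⦃x y : FreeUi K I⦄, iRel K ε c τ x y →
      ((RingQuot.mkAlgHom (RatFunc K) (iRel K ε c τ)).toRingHom.comp
        (IQGBar.Φ K c ε τ)) x
      = ((RingQuot.mkAlgHom (RatFunc K) (iRel K ε c τ)).toRingHom.comp
        (IQGBar.Φ K c ε τ)) y := by
    intro x y h
    exact IQGBar.Φ_rel K c ε τ hcii hτ hτc hτε h
  let ψ0 : Ui K ε c τ →+* Ui K ε c τ := RingQuot.lift ⟨_, key⟩
  have hmk : ∀ z : FreeUi K I,
      ψ0 (RingQuot.mkAlgHom (RatFunc K) (iRel K ε c τ) z)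
        = RingQuot.mkAlgHom (RatFunc K) (iRel K ε c τ) (IQGBar.Φ K c ε τ z) := by
    intro z
    have h1 : (RingQuot.mkAlgHom (RatFunc K) (iRel K ε c τ)) z
        = RingQuot.mkRingHom (iRel K ε c τ) z := by
      rw [← RingQuot.mkAlgHom_coe (RatFunc K) (iRel K ε c τ)]
      rfl
    rw [h1]
    exact RingQuot.lift_mkRingHom_apply _ key z
  have hinv : ∀ u : Ui K ε c τ, ψ0 (ψ0 u) = u := by
    intro u
    obtain ⟨z, rfl⟩ := RingQuot.mkRingHom_surjective (iRel K ε c τ) u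
    have h1 : RingQuot.mkRingHom (iRel K ε c τ) z
        = RingQuot.mkAlgHom (RatFunc K) (iRel K ε c τ) z := by
      rw [← RingQuot.mkAlgHom_coe (RatFunc K) (iRel K ε c τ)]
      rfl
    rw [h1, hmk, hmk, IQGBar.ΦΦ K c ε τ hτ hτc hτε z]
  refine ⟨⟨⟨ψ0, ψ0, hinv, hinv⟩, map_mul ψ0, map_add ψ0⟩, ?_, ?_, ?_, fun x => hinv x⟩
  · intro f
    show ψ0 (algebraMap (RatFunc K) (Ui K ε c τ) f) = _
    rw [← (RingQuot.mkAlgHom (RatFunc K) (iRel K ε c τ)).commutes f, hmk,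
      IQGBar.Φ_algebraMap, (RingQuot.mkAlgHom (RatFunc K) (iRel K ε c τ)).commutes,
      IQGBar.σb_barF]
  · intro i
    show ψ0 (RingQuot.mkAlgHom (RatFunc K) (iRel K ε c τ) (kF K i)) = _
    rw [hmk, IQGBar.Φ_kF, map_smul]
    rfl
  · intro i
    show ψ0 (RingQuot.mkAlgHom (RatFunc K) (iRel K ε c τ) (bF K i)) = _
    rw [hmk, IQGBar.Φ_bF]
    rfl
end
end

section
/- There exists an F-linear anti-automorphism σ of the universal quasi-split ıquantum group Ũ^ı (an F-linear bijection with σ(xy) = σ(y)σ(x) for all x, y and σ(1) = 1) such that σ(B_i) = B_i and σ(k̃_i) = k̃_{τi} for all i ∈ I; moreover σ ∘ σ = id. -/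
/-!
The universal quasi-split ıquantum group `Ũ^ı` attached to a symmetrizable
generalized Cartan matrix `c` with symmetrizer `ε` and an involution `τ`,
presented by generators `B_i, k̃_i, k̃_i⁻¹ (i ∈ I)` and the relations
(i)-(vi) of the Serre presentation (Chen-Lu-Wang), realized as a `RingQuot`
of the free algebra over `F = 𝕂(q)` on the generators.
-/

noncomputable section

variable (K : Type*) [Field K] {I : Type*}

variable (ε : I → ℕ)

section IQGAux

namespace IQG

open MulOpposite

variable {K : Type*} [Field K] {I : Type*}
variable (c : I → I → ℤ) (ε : I → ℕ) (τ : I → I)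

/-- The quotient map. -/
def piU : FreeUi K I →ₐ[RatFunc K] Ui K ε c τ :=
  RingQuot.mkAlgHom (RatFunc K) (iRel K ε c τ)

/-- Generator images for the anti-automorphism. -/
def sigGen : Gen I → (Ui K ε c τ)ᵐᵒᵖ
  | Gen.B i => op (piU c ε τ (bF K i))
  | Gen.k i => op (piU c ε τ (kF K (τ i)))
  | Gen.kinv i => op (piU c ε τ (kiF K (τ i)))

/-- The (to-be) anti-automorphism, on the free algebra, valued in the opposite. -/
def phi0 : FreeUi K I →ₐ[RatFunc K] (Ui K ε c τ)ᵐᵒᵖ :=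
  FreeAlgebra.lift _ (sigGen c ε τ)

@[simp] lemma phi0_bF (i : I) :
    phi0 c ε τ (bF K i) = op (piU c ε τ (bF K i)) := by
  simp [phi0, bF, sigGen]

@[simp] lemma phi0_kF (i : I) :
    phi0 c ε τ (kF K i) = op (piU c ε τ (kF K (τ i))) := by
  simp [phi0, kF, sigGen]

@[simp] lemma phi0_kiF (i : I) :
    phi0 c ε τ (kiF K i) = op (piU c ε τ (kiF K (τ i))) := by
  simp [phi0, kiF, sigGen]


lemma qi_ne (i : I) : qi K ε i ≠ 0 :=
  pow_ne_zero _ RatFunc.X_ne_zero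

lemma rel (x y : FreeUi K I) (h : iRel K ε c τ x y) :
    piU c ε τ x = piU c ε τ y :=
  RingQuot.mkAlgHom_rel _ h

lemma rel_kB (ℓ i : I) :
    piU c ε τ (kF K ℓ) * piU c ε τ (bF K i) =
      (qi K ε i ^ (c (τ ℓ) i - c ℓ i)) • (piU c ε τ (bF K i) * piU c ε τ (kF K ℓ)) := by
  have := rel c ε τ _ _ (iRel.k_B (K := K) ℓ i)
  simpa [map_mul, map_smul] using this

lemma rel_kB_pow (ℓ i : I) (m : ℕ) :
    piU c ε τ (kF K ℓ) * piU c ε τ (bF K i) ^ m =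
      ((qi K ε i ^ (c (τ ℓ) i - c ℓ i)) ^ m) •
        (piU c ε τ (bF K i) ^ m * piU c ε τ (kF K ℓ)) := by
  induction m with
  | zero => simp
  | succ m ih =>
      rw [pow_succ, ← mul_assoc, ih, smul_mul_assoc, mul_assoc, rel_kB,
        mul_smul_comm, smul_smul, ← mul_assoc, ← pow_succ]

lemma neg_one_zpow_congr (a b : ℤ) (h : (a - b) % 2 = 0) :
    ((-1 : RatFunc K)) ^ a = (-1 : RatFunc K) ^ b := by
  obtain ⟨k, hk⟩ : (2 : ℤ) ∣ (a - b) := Int.dvd_of_emod_eq_zero h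
  have ha : a = b + 2 * k := by omega
  rw [ha, zpow_add₀ (by norm_num : (-1 : RatFunc K) ≠ 0), zpow_mul]
  norm_num

lemma sum_two_mul_add_two (m : ℕ) :
    ∑ k ∈ Finset.range m, (2 * k + 2) = m * m + m := by
  induction m with
  | zero => simp
  | succ m ih => rw [Finset.sum_range_succ, ih]; ring

lemma poch_neg (v : RatFunc K) (hv : v ≠ 0) (m : ℕ) :
    qpoch (v ^ (-2 : ℤ)) (v ^ (-2 : ℤ)) m =
      ((-1 : RatFunc K) ^ m * (v⁻¹) ^ (m * m + m)) *
        qpoch (v ^ (2 : ℤ)) (v ^ (2 : ℤ)) m := by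
  have hfac : ∀ k : ℕ, (1 : RatFunc K) - v ^ (-2 : ℤ) * (v ^ (-2 : ℤ)) ^ k
      = ((-1) * (v⁻¹ ^ (2 * k + 2))) * (1 - v ^ (2 : ℤ) * (v ^ (2 : ℤ)) ^ k) := by
    intro k
    have h1 : v ^ (-2 : ℤ) = (v⁻¹) ^ 2 := by
      rw [zpow_neg, show (2 : ℤ) = ((2 : ℕ) : ℤ) from rfl, zpow_natCast, inv_pow]
    have h2 : v ^ (2 : ℤ) = v ^ 2 := by
      rw [show (2 : ℤ) = ((2 : ℕ) : ℤ) from rfl, zpow_natCast]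
    have hcan : (v⁻¹) ^ (2 * k + 2) * v ^ (2 * k + 2) = 1 := by
      rw [inv_pow, inv_mul_cancel₀ (pow_ne_zero _ hv)]
    rw [h1, h2]
    linear_combination -hcan
  unfold qpoch
  rw [Finset.prod_congr rfl fun k _ => hfac k, Finset.prod_mul_distrib,
    Finset.prod_mul_distrib, Finset.prod_const, Finset.card_range,
    Finset.prod_pow_eq_pow_sum, sum_two_mul_add_two]

lemma bkl_scalar (v : RatFunc K) (hv : v ≠ 0) (c₀ : ℤ) (m : ℕ) (hm : (m : ℤ) = -c₀) :
    (v ^ c₀ * qpoch (v ^ (-2 : ℤ)) (v ^ (-2 : ℤ)) m) * (v ^ ((2 : ℤ) - c₀)) ^ m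
      = ((-1 : RatFunc K) ^ c₀) * qpoch (v ^ (2 : ℤ)) (v ^ (2 : ℤ)) m := by
  have hc₀ : c₀ = -(m : ℤ) := by omega
  have hsgn : ((-1 : RatFunc K) ^ c₀) = (-1 : RatFunc K) ^ (m : ℤ) :=
    neg_one_zpow_congr (c₀) (m) (by omega)
  have e1 : (v ^ ((2 : ℤ) - c₀)) ^ m = v ^ (((2 : ℤ) - c₀) * m) := by
    rw [← zpow_natCast (v ^ ((2 : ℤ) - c₀)) m, ← zpow_mul]
  have e2 : (v⁻¹) ^ (m * m + m) = v ^ (-((m : ℤ) * m + m)) := by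
    rw [inv_pow, ← zpow_natCast, ← zpow_neg]
    push_cast
    ring_nf
  have key : v ^ c₀ * (v⁻¹) ^ (m * m + m) * (v ^ ((2 : ℤ) - c₀)) ^ m = 1 := by
    rw [e1, e2, ← zpow_add₀ hv, ← zpow_add₀ hv]
    have : c₀ + -((m : ℤ) * m + m) + ((2 : ℤ) - c₀) * m = 0 := by rw [hc₀]; ring
    rw [this, zpow_zero]
  rw [poch_neg v hv, hsgn, zpow_natCast]
  calc v ^ c₀ * ((-1 : RatFunc K) ^ m * (v⁻¹) ^ (m * m + m) *
          qpoch (v ^ (2 : ℤ)) (v ^ (2 : ℤ)) m) * (v ^ ((2 : ℤ) - c₀)) ^ m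
      = (v ^ c₀ * (v⁻¹) ^ (m * m + m) * (v ^ ((2 : ℤ) - c₀)) ^ m) *
          ((-1 : RatFunc K) ^ m * qpoch (v ^ (2 : ℤ)) (v ^ (2 : ℤ)) m) := by ring
    _ = (-1 : RatFunc K) ^ m * qpoch (v ^ (2 : ℤ)) (v ^ (2 : ℤ)) m := by
        rw [key, one_mul]

lemma op_smul' (r : RatFunc K) (a : Ui K ε c τ) :
    op (r • a) = r • op a := rfl

lemma phi0_dpF (i : I) (n : ℕ) :
    phi0 c ε τ (dpF K ε i n) = op (piU c ε τ (dpF K ε i n)) := by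
  simp only [dpF, map_smul, map_pow, phi0_bF, ← op_pow, ← op_smul' c ε τ]

lemma smul_rearrange {M : Type*} [AddCommGroup M] [Module (RatFunc K) M]
    (w s A B : RatFunc K) (X Y : M) :
    (-w) • (s • (A • X - B • Y)) = s • ((w * B) • Y - (w * A) • X) := by
  have e1 : (-w) * (s * A) = -(s * (w * A)) := by ring
  have e2 : (-w) * (s * B) = -(s * (w * B)) := by ring
  simp only [smul_sub, smul_smul]
  rw [e1, e2, neg_smul, neg_smul, sub_neg_eq_add, neg_add_eq_sub]

lemma kU_dpU (ℓ i : I) (m : ℕ) :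
    piU c ε τ (kF K ℓ) * piU c ε τ (dpF K ε i m) =
      ((qi K ε i ^ (c (τ ℓ) i - c ℓ i)) ^ m) •
        (piU c ε τ (dpF K ε i m) * piU c ε τ (kF K ℓ)) := by
  simp only [dpF, map_smul, map_pow]
  rw [mul_smul_comm, rel_kB_pow, smul_mul_assoc, smul_comm]

lemma commute_kB (i : I) (hi : τ i = i) :
    Commute (piU c ε τ (kF K i)) (piU c ε τ (bF K i)) := by
  have h1 := rel_kB (K := K) c ε τ i i
  rw [hi, sub_self, zpow_zero, one_smul] at h1
  exact h1

lemma listop (G : List (Ui K ε c τ)) :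
    (G.map op).prod = op (G.reverse.prod) := by
  rw [MulOpposite.op_list_prod, List.map_reverse, List.reverse_reverse]

lemma phi0_hd_prod (hd : FreeUi K I) (L : List (FreeUi K I))
    (hhd : phi0 c ε τ hd = op (piU c ε τ hd))
    (hL : ∀ x ∈ L, phi0 c ε τ x = op (piU c ε τ x))
    (hpair : (L.map (piU c ε τ)).Pairwise Commute)
    (hcm : ∀ x ∈ L.map (piU c ε τ), Commute (piU c ε τ hd) x) :
    phi0 c ε τ (hd * L.prod) = op (piU c ε τ (hd * L.prod)) := by
  have hmap : L.map (phi0 c ε τ) = (L.map (piU c ε τ)).map op := by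
    rw [List.map_map]
    exact List.map_congr_left hL
  rw [map_mul, map_mul, hhd, map_list_prod, map_list_prod, hmap, listop,
    (List.reverse_perm _).prod_eq' (List.pairwise_reverse.mpr
      (hpair.imp fun h => h.symm)), ← op_mul]
  congr 1
  exact ((Commute.list_prod_right _ _ hcm).eq).symm

lemma phi0_idpF (i : I) (hi : τ i = i) (p : ZMod 2) (m : ℕ) :
    phi0 c ε τ (idpF K ε i p m) = op (piU c ε τ (idpF K ε i p m)) := by
  have hKB := commute_kB (K := K) c ε τ i hi
  have hB2K : Commute ((piU c ε τ (bF K i)) ^ 2) (piU c ε τ (kF K i)) :=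
    hKB.symm.pow_left 2
  rw [idpF, map_smul, map_smul]
  congr 1
  refine phi0_hd_prod (K := K) c ε τ _ _ ?_ ?_ ?_ ?_
  · by_cases hm2 : m % 2 = 1 <;>
      simp [hm2, phi0_bF, MulOpposite.op_one]
  · intro x hx
    obtain ⟨j, hj, rfl⟩ := List.mem_map.mp hx
    simp only [map_sub, map_smul, map_pow, phi0_bF, phi0_kF, hi, ← op_pow,
      ← op_smul' c ε τ, ← MulOpposite.op_sub]
  · rw [List.map_map]
    refine List.pairwise_of_forall_mem_list ?_
    intro x hx y hy
    obtain ⟨a, ha, rfl⟩ := List.mem_map.mp hx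
    obtain ⟨b, hb, rfl⟩ := List.mem_map.mp hy
    simp only [Function.comp_apply]
    rw [map_sub, map_smul, map_pow, map_sub, map_smul, map_pow]
    exact ((Commute.refl _).sub_right (hB2K.smul_right _)).sub_left
      ((hB2K.symm.sub_right ((Commute.refl _).smul_right _)).smul_left _)
  · intro x hx
    rw [List.map_map] at hx
    obtain ⟨a, ha, rfl⟩ := List.mem_map.mp hx
    simp only [Function.comp_apply]
    rw [map_sub, map_smul, map_pow]
    by_cases hm2 : m % 2 = 1
    · rw [if_pos hm2]
      exact ((Commute.refl _).pow_right 2).sub_right (hKB.symm.smul_right _)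
    · rw [if_neg hm2, map_one]
      exact Commute.one_left _

set_option maxHeartbeats 1600000 in
lemma preserves (hcii : ∀ i, c i i = 2) (hcneg : ∀ i j, i ≠ j → c i j ≤ 0)
    (hτ : ∀ i, τ (τ i) = i) (hτc : ∀ i j, c (τ i) (τ j) = c i j) :
    ∀ ⦃x y : FreeUi K I⦄, iRel K ε c τ x y → phi0 c ε τ x = phi0 c ε τ y := by
  intro x y h
  induction h with
  | k_kinv i =>
      have h1 := rel c ε τ _ _ (iRel.kinv_k (K := K) (ε := ε) (c := c) (τ := τ) (τ i))
      simp only [map_mul, map_one] at h1 ⊢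
      rw [phi0_kF, phi0_kiF, ← op_mul, h1, op_one]
  | kinv_k i =>
      have h1 := rel c ε τ _ _ (iRel.k_kinv (K := K) (ε := ε) (c := c) (τ := τ) (τ i))
      simp only [map_mul, map_one] at h1 ⊢
      rw [phi0_kF, phi0_kiF, ← op_mul, h1, op_one]
  | k_k i ℓ =>
      have h1 := rel c ε τ _ _ (iRel.k_k (K := K) (ε := ε) (c := c) (τ := τ) (τ ℓ) (τ i))
      simp only [map_mul] at h1 ⊢
      rw [phi0_kF, phi0_kF, ← op_mul, ← op_mul, h1]
  | k_B ℓ i =>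
      have h1 := rel_kB (K := K) c ε τ (τ ℓ) i
      rw [hτ ℓ] at h1
      simp only [map_mul, map_smul, phi0_kF, phi0_bF, ← op_mul, ← op_smul' c ε τ]
      rw [h1, smul_smul, ← zpow_add₀ (qi_ne (K := K) ε i)]
      have h2 : (c (τ ℓ) i - c ℓ i) + (c ℓ i - c (τ ℓ) i) = 0 := by ring
      rw [h2, zpow_zero, one_smul]
  | B_B i j h0 hτ' =>
      have h1 := rel c ε τ _ _ (iRel.B_B (K := K) (ε := ε) (c := c) (τ := τ) i j h0 hτ')
      simp only [map_mul] at h1 ⊢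
      rw [phi0_bF, phi0_bF, ← op_mul, ← op_mul, h1]
  | serre i j hij h1 h2 =>
      have hrel := rel c ε τ _ _ (iRel.serre (K := K) (ε := ε) (c := c) (τ := τ) i j hij h1 h2)
      simp only [map_sum, map_smul, map_mul, map_zero, mul_assoc] at hrel
      simp only [map_sum, map_smul, map_mul, map_zero, phi0_dpF, phi0_bF,
        ← op_mul, ← op_smul' c ε τ, ← Finset.op_sum]
      rw [show (0 : (Ui K ε c τ)ᵐᵒᵖ) = op 0 from rfl]
      congr 1
      set N := (1 - c i j).toNat with hNdef
      set D : ℕ → Ui K ε c τ := fun n => piU c ε τ (dpF K ε i n) with hD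
      set Bj := piU c ε τ (bF K j) with hBj
      calc ∑ n ∈ Finset.range (N + 1), (-1 : RatFunc K) ^ n • (D (N - n) * (Bj * D n))
          = ∑ n ∈ Finset.range (N + 1),
              (-1 : RatFunc K) ^ (N - n) • (D (N - (N - n)) * (Bj * D (N - n))) := by
            rw [← Finset.sum_range_reflect
              (fun n => (-1 : RatFunc K) ^ n • (D (N - n) * (Bj * D n))) (N + 1)]
            simp
        _ = ∑ n ∈ Finset.range (N + 1),
              (-1 : RatFunc K) ^ N • ((-1 : RatFunc K) ^ n • (D n * (Bj * D (N - n)))) := by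
            refine Finset.sum_congr rfl fun n hn => ?_
            have hle : n ≤ N := Nat.lt_succ_iff.mp (Finset.mem_range.mp hn)
            have hsg : ((-1 : RatFunc K)) ^ (N - n) = (-1 : RatFunc K) ^ N * (-1) ^ n := by
              rw [← pow_add, show N + n = (N - n) + 2 * n by omega, pow_add, pow_mul]
              norm_num
            rw [Nat.sub_sub_self hle, hsg, mul_smul]
        _ = (-1 : RatFunc K) ^ N • ∑ n ∈ Finset.range (N + 1),
              (-1 : RatFunc K) ^ n • (D n * (Bj * D (N - n))) := by
            rw [Finset.smul_sum]
        _ = 0 := by rw [hrel, smul_zero]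
  | bkl i h =>
      have hne : i ≠ τ i := fun e => h e.symm
      have hci : c (τ i) i = c i (τ i) := by
        have := hτc i (τ i); rwa [hτ i] at this
      have hc0 : c i (τ i) ≤ 0 := hcneg i (τ i) hne
      have hmz : (((-(c i (τ i))).toNat : ℕ) : ℤ) = -(c i (τ i)) :=
        Int.toNat_of_nonneg (by omega)
      have hNz : (((1 - c i (τ i)).toNat : ℕ) : ℤ) = 1 - c i (τ i) :=
        Int.toNat_of_nonneg (by omega)
      have hrel := rel c ε τ _ _ (iRel.bkl (K := K) (ε := ε) (c := c) (τ := τ) i h)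
      simp only [map_sum, map_smul, map_mul, map_sub, mul_assoc] at hrel
      simp only [map_sum, map_smul, map_mul, map_sub, phi0_dpF, phi0_bF, phi0_kF, hτ i,
        ← op_mul, ← op_smul' c ε τ, ← MulOpposite.op_sub, ← Finset.op_sum]
      congr 1
      have hvne : qi K ε i ≠ 0 := qi_ne (K := K) ε i
      have hne1 : (-1 : RatFunc K) ≠ 0 := by norm_num
      set v := qi K ε i with hv
      set c₀ := c i (τ i) with hc₀
      set m := (-c₀).toNat with hm
      set N := (1 - c₀).toNat with hN
      set D : ℕ → Ui K ε c τ := fun n => piU c ε τ (dpF K ε i n) with hD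
      set Bτ := piU c ε τ (bF K (τ i)) with hBτ
      set Ki := piU c ε τ (kF K i) with hKi
      set Kτ := piU c ε τ (kF K (τ i)) with hKτ
      have hKτD : Kτ * D m = (v ^ ((2 : ℤ) - c₀)) ^ m • (D m * Kτ) := by
        have h1 := kU_dpU (K := K) c ε τ (τ i) i m
        rw [hτ i] at h1
        have e1 : c i i - c (τ i) i = (2 : ℤ) - c₀ := by
          have := hcii i; omega
        rw [e1] at h1
        exact h1
      have hKiD : Ki * D m = (v ^ (c₀ - (2 : ℤ))) ^ m • (D m * Ki) := by
        have h1 := kU_dpU (K := K) c ε τ i i m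
        have e2 : c (τ i) i - c i i = c₀ - (2 : ℤ) := by
          have := hcii i; omega
        rw [e2] at h1
        exact h1
      have s1 := bkl_scalar (K := K) v hvne c₀ m hmz
      have h12 : (v ^ ((2 : ℤ) - c₀)) ^ m * (v ^ (c₀ - (2 : ℤ))) ^ m = 1 := by
        rw [← mul_pow, ← zpow_add₀ hvne,
          show ((2 : ℤ) - c₀) + (c₀ - 2) = 0 by ring, zpow_zero, one_pow]
      have hww : ((-1 : RatFunc K) ^ c₀) * ((-1 : RatFunc K) ^ c₀) = 1 := by
        rw [← zpow_add₀ hne1, neg_one_zpow_congr (K := K) (c₀ + c₀) 0 (by omega), zpow_zero]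
      have s2 : qpoch (v ^ (2 : ℤ)) (v ^ (2 : ℤ)) m * (v ^ (c₀ - (2 : ℤ))) ^ m
          = ((-1 : RatFunc K) ^ c₀) * (v ^ c₀ * qpoch (v ^ (-2 : ℤ)) (v ^ (-2 : ℤ)) m) := by
        calc qpoch (v ^ (2 : ℤ)) (v ^ (2 : ℤ)) m * (v ^ (c₀ - (2 : ℤ))) ^ m
            = ((-1 : RatFunc K) ^ c₀ * ((v ^ c₀ * qpoch (v ^ (-2 : ℤ)) (v ^ (-2 : ℤ)) m) *
                (v ^ ((2 : ℤ) - c₀)) ^ m)) * (v ^ (c₀ - (2 : ℤ))) ^ m := by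
              rw [s1, ← mul_assoc, hww, one_mul]
          _ = ((-1 : RatFunc K) ^ c₀) * (v ^ c₀ * qpoch (v ^ (-2 : ℤ)) (v ^ (-2 : ℤ)) m) := by
              rw [mul_assoc ((-1 : RatFunc K) ^ c₀), mul_assoc, h12, mul_one]
      have s3 : ((-1 : RatFunc K) ^ ((1 : ℤ) - c₀)) = -((-1 : RatFunc K) ^ c₀) := by
        rw [sub_eq_add_neg, zpow_add₀ hne1, zpow_one,
          neg_one_zpow_congr (K := K) (-c₀) c₀ (by omega)]
        ring
      calc ∑ n ∈ Finset.range (N + 1),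
              ((-1 : RatFunc K) ^ ((n : ℤ) + c₀)) • (D (N - n) * (Bτ * D n))
          = ∑ n ∈ Finset.range (N + 1),
              ((-1 : RatFunc K) ^ ((((N - n : ℕ)) : ℤ) + c₀)) •
                (D (N - (N - n)) * (Bτ * D (N - n))) := by
            rw [← Finset.sum_range_reflect
              (fun n => ((-1 : RatFunc K) ^ ((n : ℤ) + c₀)) • (D (N - n) * (Bτ * D n))) (N + 1)]
            simp
        _ = ∑ n ∈ Finset.range (N + 1),
              ((-1 : RatFunc K) ^ ((1 : ℤ) - c₀)) •
                (((-1 : RatFunc K) ^ ((n : ℤ) + c₀)) • (D n * (Bτ * D (N - n)))) := by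
            refine Finset.sum_congr rfl fun n hn => ?_
            have hle : n ≤ N := Nat.lt_succ_iff.mp (Finset.mem_range.mp hn)
            rw [Nat.sub_sub_self hle, smul_smul, ← zpow_add₀ hne1]
            congr 1
            apply neg_one_zpow_congr
            rw [Nat.cast_sub hle]
            omega
        _ = ((-1 : RatFunc K) ^ ((1 : ℤ) - c₀)) • ∑ n ∈ Finset.range (N + 1),
              ((-1 : RatFunc K) ^ ((n : ℤ) + c₀)) • (D n * (Bτ * D (N - n))) := by
            rw [Finset.smul_sum]
        _ = ((-1 : RatFunc K) ^ ((1 : ℤ) - c₀)) • ((v - v⁻¹)⁻¹ •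
              ((v ^ c₀ * qpoch (v ^ (-2 : ℤ)) (v ^ (-2 : ℤ)) m) • (D m * Ki)
                - (qpoch (v ^ (2 : ℤ)) (v ^ (2 : ℤ)) m) • (D m * Kτ))) := by
            rw [hrel]
        _ = (v - v⁻¹)⁻¹ •
              ((v ^ c₀ * qpoch (v ^ (-2 : ℤ)) (v ^ (-2 : ℤ)) m) • (Kτ * D m)
                - (qpoch (v ^ (2 : ℤ)) (v ^ (2 : ℤ)) m) • (Ki * D m)) := by
            rw [hKτD, hKiD,
              smul_smul (v ^ c₀ * qpoch (v ^ (-2 : ℤ)) (v ^ (-2 : ℤ)) m),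
              smul_smul (qpoch (v ^ (2 : ℤ)) (v ^ (2 : ℤ)) m), s1, s2, s3]
            exact smul_rearrange (K := K) _ _ _ _ _ _
  | iserre i j hi hij p =>
      have h2c : ((c i j : ZMod 2)) + ((c i j : ZMod 2)) = 0 :=
        CharTwo.add_self_eq_zero _
      have hpp : (p + (c i j : ZMod 2)) + (c i j : ZMod 2) = p := by
        rw [add_assoc, h2c, add_zero]
      have hrel := rel c ε τ _ _
        (iRel.iserre (K := K) (ε := ε) (c := c) (τ := τ) i j hi hij (p + (c i j : ZMod 2)))
      rw [hpp] at hrel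
      simp only [map_sum, map_smul, map_mul, map_zero, mul_assoc] at hrel
      simp only [map_sum, map_smul, map_mul, map_zero, phi0_idpF c ε τ i hi, phi0_bF,
        ← op_mul, ← op_smul' c ε τ, ← Finset.op_sum]
      rw [show (0 : (Ui K ε c τ)ᵐᵒᵖ) = op 0 from rfl]
      refine congrArg op ?_
      set N := (1 - c i j).toNat with hNdef
      set Dp : ℕ → Ui K ε c τ := fun n => piU c ε τ (idpF K ε i p n) with hDp
      set Dq : ℕ → Ui K ε c τ := fun n => piU c ε τ (idpF K ε i (p + (c i j : ZMod 2)) n) with hDq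
      set Bj := piU c ε τ (bF K j) with hBj
      calc ∑ r ∈ Finset.range (N + 1), (-1 : RatFunc K) ^ r • (Dq (N - r) * (Bj * Dp r))
          = ∑ r ∈ Finset.range (N + 1),
              (-1 : RatFunc K) ^ (N - r) • (Dq (N - (N - r)) * (Bj * Dp (N - r))) := by
            rw [← Finset.sum_range_reflect
              (fun r => (-1 : RatFunc K) ^ r • (Dq (N - r) * (Bj * Dp r))) (N + 1)]
            simp
        _ = ∑ r ∈ Finset.range (N + 1),
              (-1 : RatFunc K) ^ N • ((-1 : RatFunc K) ^ r • (Dq r * (Bj * Dp (N - r)))) := by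
            refine Finset.sum_congr rfl fun r hr => ?_
            have hle : r ≤ N := Nat.lt_succ_iff.mp (Finset.mem_range.mp hr)
            have hsg : ((-1 : RatFunc K)) ^ (N - r) = (-1 : RatFunc K) ^ N * (-1) ^ r := by
              rw [← pow_add, show N + r = (N - r) + 2 * r by omega, pow_add, pow_mul]
              norm_num
            rw [Nat.sub_sub_self hle, hsg, mul_smul]
        _ = (-1 : RatFunc K) ^ N • ∑ r ∈ Finset.range (N + 1),
              (-1 : RatFunc K) ^ r • (Dq r * (Bj * Dp (N - r))) := by
            rw [Finset.smul_sum]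
        _ = 0 := by rw [hrel, smul_zero]

end IQG

end IQGAux

/-- (Lemma 2.4(b): the anti-involution `σ` of `Ũ^ı`.) There is an `F = 𝕂(q)`-linear
bijection `σ` of `Ũ^ı` with `σ(xy) = σ(y)σ(x)`, `σ(1) = 1`, `σ(B_i) = B_i`,
`σ(k̃_i) = k̃_{τi}`, and `σ ∘ σ = id`. -/
theorem stmt1 {K : Type*} [Field K] [CharZero K]
    {I : Type*} [Fintype I] [DecidableEq I]
    (c : I → I → ℤ) (ε : I → ℕ) (τ : I → I)
    (hcii : ∀ i, c i i = 2)
    (hcneg : ∀ i j, i ≠ j → c i j ≤ 0)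
    (hczero : ∀ i j, c i j = 0 ↔ c j i = 0)
    (hε : ∀ i, 0 < ε i)
    (hsym : ∀ i j, (ε i : ℤ) * c i j = (ε j : ℤ) * c j i)
    (hτ : ∀ i, τ (τ i) = i)
    (hτc : ∀ i j, c (τ i) (τ j) = c i j)
    (hτε : ∀ i, ε (τ i) = ε i) :
    ∃ σ : Ui K ε c τ ≃ₗ[RatFunc K] Ui K ε c τ,
      (∀ x y : Ui K ε c τ, σ (x * y) = σ y * σ x) ∧
      σ 1 = 1 ∧
      (∀ i : I, σ (bU K ε c τ i) = bU K ε c τ i) ∧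
      (∀ i : I, σ (kU K ε c τ i) = kU K ε c τ (τ i)) ∧
      (∀ x : Ui K ε c τ, σ (σ x) = x) := by
  have hpres := IQG.preserves (K := K) c ε τ hcii hcneg hτ hτc
  set Φ : Ui K ε c τ →ₐ[RatFunc K] (Ui K ε c τ)ᵐᵒᵖ :=
    RingQuot.liftAlgHom (RatFunc K) ⟨IQG.phi0 c ε τ, hpres⟩ with hΦ
  have hmk : ∀ x : FreeUi K I,
      Φ (RingQuot.mkAlgHom (RatFunc K) (iRel K ε c τ) x) = IQG.phi0 c ε τ x :=
    fun x => RingQuot.liftAlgHom_mkAlgHom_apply _ _ _ _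
  have hBgen : ∀ i : I, Φ (bU K ε c τ i) = MulOpposite.op (bU K ε c τ i) := by
    intro i
    rw [bU, hmk, IQG.phi0_bF]
    rfl
  have hKgen : ∀ i : I, Φ (kU K ε c τ i) = MulOpposite.op (kU K ε c τ (τ i)) := by
    intro i
    rw [kU, hmk, IQG.phi0_kF]
    rfl
  have hKigen : ∀ i : I,
      Φ (RingQuot.mkAlgHom (RatFunc K) (iRel K ε c τ) (kiF K i))
        = MulOpposite.op (RingQuot.mkAlgHom (RatFunc K) (iRel K ε c τ) (kiF K (τ i))) := by
    intro i
    rw [hmk, IQG.phi0_kiF]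
    rfl
  set Ψ : Ui K ε c τ →ₐ[RatFunc K] Ui K ε c τ :=
    ((AlgEquiv.opOp (RatFunc K) (Ui K ε c τ)).symm.toAlgHom.comp
      ((AlgHom.op Φ).comp Φ)) with hΨdef
  have hop : ∀ y : Ui K ε c τ,
      (AlgHom.op Φ) (MulOpposite.op y) = MulOpposite.op (Φ y) := fun y => rfl
  have hΨ : Ψ = AlgHom.id (RatFunc K) (Ui K ε c τ) := by
    apply RingQuot.ringQuot_ext'
    apply FreeAlgebra.hom_ext
    funext g
    simp only [AlgHom.coe_comp, Function.comp_apply, AlgHom.coe_id, id_eq]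
    cases g with
    | B i =>
        have h1 : Ψ ((RingQuot.mkAlgHom (RatFunc K) (iRel K ε c τ))
            (FreeAlgebra.ι (RatFunc K) (Gen.B i)))
          = (AlgEquiv.opOp (RatFunc K) (Ui K ε c τ)).symm
              ((AlgHom.op Φ) (Φ (bU K ε c τ i))) := rfl
        rw [h1, hBgen i, hop, hBgen i]
        rfl
    | k i =>
        have h1 : Ψ ((RingQuot.mkAlgHom (RatFunc K) (iRel K ε c τ))
            (FreeAlgebra.ι (RatFunc K) (Gen.k i)))
          = (AlgEquiv.opOp (RatFunc K) (Ui K ε c τ)).symm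
              ((AlgHom.op Φ) (Φ (kU K ε c τ i))) := rfl
        rw [h1, hKgen i, hop, hKgen (τ i), hτ i]
        rfl
    | kinv i =>
        have h1 : Ψ ((RingQuot.mkAlgHom (RatFunc K) (iRel K ε c τ))
            (FreeAlgebra.ι (RatFunc K) (Gen.kinv i)))
          = (AlgEquiv.opOp (RatFunc K) (Ui K ε c τ)).symm
              ((AlgHom.op Φ) (Φ ((RingQuot.mkAlgHom (RatFunc K) (iRel K ε c τ))
                (kiF K i)))) := rfl
        rw [h1, hKigen i, hop, hKigen (τ i), hτ i]
        rfl
  set L : Ui K ε c τ →ₗ[RatFunc K] Ui K ε c τ :=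
    ((MulOpposite.opLinearEquiv (RatFunc K)).symm.toLinearMap).comp Φ.toLinearMap with hL
  have hLapp : ∀ x, L x = MulOpposite.unop (Φ x) := fun x => rfl
  have hinv : ∀ x, L (L x) = x := by
    intro x
    have h1 : L (L x) = Ψ x := rfl
    rw [h1, hΨ]
    rfl
  refine ⟨{ L with invFun := L, left_inv := hinv, right_inv := hinv }, ?_, ?_, ?_, ?_, ?_⟩
  · intro x y
    show MulOpposite.unop (Φ (x * y)) = MulOpposite.unop (Φ y) * MulOpposite.unop (Φ x)
    rw [map_mul]
    rfl
  · show MulOpposite.unop (Φ 1) = 1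
    rw [map_one]
    rfl
  · intro i
    show MulOpposite.unop (Φ (bU K ε c τ i)) = bU K ε c τ i
    rw [hBgen]
    rfl
  · intro i
    show MulOpposite.unop (Φ (kU K ε c τ i)) = kU K ε c τ (τ i)
    rw [hKgen]
    rfl
  · exact hinv
end
end

section
/- (Theorem 3.2, Serre–Lusztig relations for i ≠ τi.) Assume in addition the BKL relation: ∑_{n=0}^{1−c} (−1)^{n+c} B_i^{(n)} B_{τi} B_i^{(1−c−n)} = (q_i − q_i^{-1})^{-1} ( q_i^{c} (q_i^{-2}; q_i^{-2})_{−c} B_i^{(−c)} k̃_i − (q_i^{2}; q_i^{2})_{−c} B_i^{(−c)} k̃_{τi} ), where (a; x)_n = ∏_{k=0}^{n−1} (1 − a x^k). Then ỹ_{m,e} = 0 for every integer m ≥ 1−c and every e ∈ {1, −1}. -/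
noncomputable section

/-- The divided power `x^{(m)} = x^m/[m]_v!` for `m ≥ 0`, and `0` for `m < 0`. -/
def dp {K : Type*} [Field K] {A : Type*} [Ring A] [Algebra (RatFunc K) A]
    (v : RatFunc K) (x : A) (m : ℤ) : A :=
  if m < 0 then 0 else (qfact v m.toNat)⁻¹ • x ^ m.toNat

/-- `P_{m,e} = ∏_{j=0}^{c+m−2} (−q_i^{e(2j−c−2m+2)} + q_i^{c−2})`,
an empty product (occurring when `c+m−2 < 0`) being `1`. -/
def Pprod {K : Type*} [Field K] (v : RatFunc K) (c : ℤ) (m : ℕ) (e : ℤ) : RatFunc K :=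
  ∏ j ∈ Finset.range (c + (m : ℤ) - 1).toNat,
    (-(v ^ (e * (2 * (j : ℤ) - c - 2 * (m : ℤ) + 2))) + v ^ (c - 2))

/-- `Q_{m,e} = ∏_{j=0}^{c+m−2} (−q_i^{e(2j−c−2m+2)} + q_i^{2−c})`. -/
def Qprod {K : Type*} [Field K] (v : RatFunc K) (c : ℤ) (m : ℕ) (e : ℤ) : RatFunc K :=
  ∏ j ∈ Finset.range (c + (m : ℤ) - 1).toNat,
    (-(v ^ (e * (2 * (j : ℤ) - c - 2 * (m : ℤ) + 2))) + v ^ (2 - c))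

/-- The element `ỹ_{m,e} = ∑_{r+s=m} (−1)^{r+c} q_i^{er(1−c−m)} B_i^{(r)} B_{τi} B_i^{(s)}
− ([1−c]!/[m]) (q_i−q_i^{-1})^{−c−1} ( P_{m,e} q_i^{(−c²+3c)/2} B_i^{(m−1)} k̃_i
  − (−1)^c Q_{m,e} q_i^{(c²−c)/2} B_i^{(m−1)} k̃_{τi} )`. -/
def ytil {K : Type*} [Field K] {A : Type*} [Ring A] [Algebra (RatFunc K) A]
    (v : RatFunc K) (Bi Bt ki kt : A) (c : ℤ) (m : ℕ) (e : ℤ) : A :=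
  (∑ r ∈ Finset.range (m + 1),
      ((-1 : RatFunc K) ^ ((r : ℤ) + c) * v ^ (e * (r : ℤ) * (1 - c - (m : ℤ)))) •
        (dp v Bi (r : ℤ) * Bt * dp v Bi ((m : ℤ) - (r : ℤ))))
    - (qfact v (1 - c).toNat / qint v (m : ℤ) * (v - v⁻¹) ^ (-c - 1)) •
      ((Pprod v c m e * v ^ ((-c ^ 2 + 3 * c) / 2)) • (dp v Bi ((m : ℤ) - 1) * ki)
        - ((-1 : RatFunc K) ^ c * Qprod v c m e * v ^ ((c ^ 2 - c) / 2)) •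
            (dp v Bi ((m : ℤ) - 1) * kt))

/-- The order-reversed element `ỹ'_{m,e}`. -/
def ytil' {K : Type*} [Field K] {A : Type*} [Ring A] [Algebra (RatFunc K) A]
    (v : RatFunc K) (Bi Bt ki kt : A) (c : ℤ) (m : ℕ) (e : ℤ) : A :=
  (∑ r ∈ Finset.range (m + 1),
      ((-1 : RatFunc K) ^ ((r : ℤ) + c) * v ^ (e * (r : ℤ) * (1 - c - (m : ℤ)))) •
        (dp v Bi ((m : ℤ) - (r : ℤ)) * Bt * dp v Bi (r : ℤ)))
    - (qfact v (1 - c).toNat / qint v (m : ℤ) * (v - v⁻¹) ^ (-c - 1)) •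
      ((Pprod v c m e * v ^ ((-c ^ 2 + 3 * c) / 2)) • (kt * dp v Bi ((m : ℤ) - 1))
        - ((-1 : RatFunc K) ^ c * Qprod v c m e * v ^ ((c ^ 2 - c) / 2)) •
            (ki * dp v Bi ((m : ℤ) - 1)))

/-- The BKL relation
`∑_{n=0}^{1−c} (−1)^{n+c} B_i^{(n)} B_{τi} B_i^{(1−c−n)}
 = (q_i−q_i^{-1})^{-1} ( q_i^c (q_i^{-2};q_i^{-2})_{−c} B_i^{(−c)} k̃_i
   − (q_i^2;q_i^2)_{−c} B_i^{(−c)} k̃_{τi} )`. -/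
def BKL {K : Type*} [Field K] {A : Type*} [Ring A] [Algebra (RatFunc K) A]
    (v : RatFunc K) (Bi Bt ki kt : A) (c : ℤ) : Prop :=
  ∑ n ∈ Finset.range ((1 - c).toNat + 1),
      ((-1 : RatFunc K) ^ ((n : ℤ) + c)) • (dp v Bi (n : ℤ) * Bt * dp v Bi (1 - c - (n : ℤ)))
    = (v - v⁻¹)⁻¹ •
        ((v ^ c * qpoch (v ^ (-2 : ℤ)) (v ^ (-2 : ℤ)) (-c).toNat) • (dp v Bi (-c) * ki)
          - qpoch (v ^ (2 : ℤ)) (v ^ (2 : ℤ)) (-c).toNat • (dp v Bi (-c) * kt))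

/-! ### Auxiliary lemmas -/

section AuxLemmas

variable {K : Type*} [Field K]

lemma ratX_pow_ne_one (k : ℕ) (hk : 0 < k) : (RatFunc.X : RatFunc K) ^ k ≠ 1 := by
  intro h
  rw [← RatFunc.algebraMap_X, ← map_pow, ← map_one (algebraMap (Polynomial K) (RatFunc K))] at h
  have h1 := RatFunc.algebraMap_injective K h
  have h2 := congrArg Polynomial.natDegree h1
  rw [Polynomial.natDegree_X_pow, Polynomial.natDegree_one] at h2
  omega

lemma ratX_zpow_ne_one (k : ℤ) (hk : k ≠ 0) : (RatFunc.X : RatFunc K) ^ k ≠ 1 := by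
  intro h
  rcases lt_trichotomy k 0 with h1 | h1 | h1
  · apply ratX_pow_ne_one (K := K) (-k).toNat (by omega)
    have hk' : (((-k).toNat : ℤ)) = -k := by omega
    rw [← zpow_natCast, hk', zpow_neg, h, inv_one]
  · exact hk h1
  · apply ratX_pow_ne_one (K := K) k.toNat (by omega)
    rw [← zpow_natCast, Int.toNat_of_nonneg (by omega), h]

variable {v : RatFunc K}

lemma v_zpow_ne_one (ε : ℕ) (hε : 0 < ε) (hv : v = RatFunc.X ^ ε) :
    ∀ n : ℤ, n ≠ 0 → v ^ n ≠ 1 := by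
  intro n hn
  rw [hv, ← zpow_natCast (RatFunc.X : RatFunc K) ε, ← zpow_mul]
  refine ratX_zpow_ne_one _ (mul_ne_zero ?_ hn)
  exact_mod_cast hε.ne'

lemma w_ne (hv0 : v ≠ 0) (hv1 : ∀ n : ℤ, n ≠ 0 → v ^ n ≠ 1) : v - v⁻¹ ≠ 0 := by
  intro h
  rw [sub_eq_zero] at h
  apply hv1 2 (by norm_num)
  rw [show (2:ℤ) = 1 + 1 by norm_num, zpow_add₀ hv0, zpow_one]
  nth_rewrite 2 [h]
  exact mul_inv_cancel₀ hv0

lemma zpow_sub_zpow_ne (hv0 : v ≠ 0) (hv1 : ∀ n : ℤ, n ≠ 0 → v ^ n ≠ 1)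
    {a b : ℤ} (hab : a ≠ b) : v ^ a - v ^ b ≠ 0 := by
  intro h
  rw [sub_eq_zero] at h
  apply hv1 (a - b) (by omega)
  rw [zpow_sub₀ hv0, h, div_self (zpow_ne_zero _ hv0)]

lemma qint_ne (hv0 : v ≠ 0) (hv1 : ∀ n : ℤ, n ≠ 0 → v ^ n ≠ 1)
    {n : ℤ} (hn : n ≠ 0) : qint v n ≠ 0 :=
  div_ne_zero (zpow_sub_zpow_ne hv0 hv1 (by omega)) (w_ne hv0 hv1)

lemma qint_zero : qint v 0 = 0 := by simp [qint]

lemma qint_w (hv0 : v ≠ 0) (hv1 : ∀ n : ℤ, n ≠ 0 → v ^ n ≠ 1) (n : ℤ) :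
    qint v n * (v - v⁻¹) = v ^ n - v ^ (-n) :=
  div_mul_cancel₀ _ (w_ne hv0 hv1)

lemma qfact_succ (n : ℕ) : qfact v (n + 1) = qfact v n * qint v ((n : ℤ) + 1) :=
  Finset.prod_range_succ _ _

lemma qfact_ne (hv0 : v ≠ 0) (hv1 : ∀ n : ℤ, n ≠ 0 → v ^ n ≠ 1) (n : ℕ) :
    qfact v n ≠ 0 := by
  induction n with
  | zero => simp [qfact]
  | succ n ih => rw [qfact_succ]; exact mul_ne_zero ih (qint_ne hv0 hv1 (by omega))

variable {A : Type*} [Ring A] [Algebra (RatFunc K) A]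

lemma dp_natCast (x : A) (n : ℕ) : dp v x (n : ℤ) = (qfact v n)⁻¹ • x ^ n := by
  simp [dp]

lemma dp_neg' (x : A) {n : ℤ} (h : n < 0) : dp v x n = 0 := by simp [dp, h]

lemma dp_mul_int (hv0 : v ≠ 0) (hv1 : ∀ n : ℤ, n ≠ 0 → v ^ n ≠ 1) (x : A)
    {k : ℤ} (hk : 0 ≤ k) : dp v x k * x = qint v (k + 1) • dp v x (k + 1) := by
  obtain ⟨n, rfl⟩ := Int.eq_ofNat_of_zero_le hk
  rw [show ((n : ℤ) + 1) = ((n + 1 : ℕ) : ℤ) by push_cast; ring, dp_natCast, dp_natCast,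
    smul_mul_assoc, ← pow_succ, smul_smul, qfact_succ]
  congr 1
  have hq : qint v ((n : ℤ) + 1) ≠ 0 := qint_ne hv0 hv1 (by omega)
  have hf : qfact v n ≠ 0 := qfact_ne hv0 hv1 n
  push_cast
  field_simp

lemma mul_dp_int (hv0 : v ≠ 0) (hv1 : ∀ n : ℤ, n ≠ 0 → v ^ n ≠ 1) (x : A)
    {k : ℤ} (hk : 0 ≤ k) : x * dp v x k = qint v (k + 1) • dp v x (k + 1) := by
  rw [← dp_mul_int hv0 hv1 x hk]
  obtain ⟨n, rfl⟩ := Int.eq_ofNat_of_zero_le hk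
  rw [dp_natCast, smul_mul_assoc, mul_smul_comm, ← pow_succ, ← pow_succ']

lemma qid_e (hv0 : v ≠ 0) {e : ℤ} (he : e = 1 ∨ e = -1) (x y : ℤ) :
    v ^ (e * x) * (v ^ y - v ^ (-y)) + v ^ (-(e * y)) * (v ^ x - v ^ (-x))
      = v ^ (x + y) - v ^ (-(x + y)) := by
  rcases he with rfl | rfl <;>
  · rw [mul_sub, mul_sub, ← zpow_add₀ hv0, ← zpow_add₀ hv0, ← zpow_add₀ hv0, ← zpow_add₀ hv0]
    ring_nf

lemma coef_num (hv0 : v ≠ 0) {e : ℤ} (he : e = 1 ∨ e = -1) (c m r : ℤ) :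
    v ^ (e * r * (1 - c - m)) * (v ^ (m + 1 - r) - v ^ (-(m + 1 - r)))
      + v ^ (e * (-c - 2 * m)) * (v ^ (e * (r - 1) * (1 - c - m)) * (v ^ r - v ^ (-r)))
      = (v ^ (m + 1) - v ^ (-(m + 1))) * v ^ (e * r * (1 - c - (m + 1))) := by
  have h := qid_e hv0 he r (m + 1 - r)
  rw [show (r : ℤ) + (m + 1 - r) = m + 1 by ring] at h
  rw [show e * r * (1 - c - m) = e * r + e * r * (1 - c - (m + 1)) by ring,
    zpow_add₀ hv0 (e * r) (e * r * (1 - c - (m + 1))),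
    ← mul_assoc (v ^ (e * (-c - 2 * m))),
    ← zpow_add₀ hv0 (e * (-c - 2 * m)) (e * (r - 1) * (1 - c - m)),
    show e * (-c - 2 * m) + e * (r - 1) * (1 - c - m)
      = -(e * (m + 1 - r)) + e * r * (1 - c - (m + 1)) by ring,
    zpow_add₀ hv0 (-(e * (m + 1 - r))) (e * r * (1 - c - (m + 1)))]
  linear_combination (v ^ (e * r * (1 - c - (m + 1)))) * h

lemma coef_main (hv0 : v ≠ 0) (hv1 : ∀ n : ℤ, n ≠ 0 → v ^ n ≠ 1)
    {e : ℤ} (he : e = 1 ∨ e = -1) (c m r : ℤ) :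
    (-1 : RatFunc K) ^ (r + c) * v ^ (e * r * (1 - c - m)) * qint v (m + 1 - r)
      - v ^ (e * (-c - 2 * m)) *
        ((-1 : RatFunc K) ^ (r - 1 + c) * v ^ (e * (r - 1) * (1 - c - m)) * qint v r)
      = qint v (m + 1) * ((-1 : RatFunc K) ^ (r + c) * v ^ (e * r * (1 - c - (m + 1)))) := by
  have hw : v - v⁻¹ ≠ 0 := w_ne hv0 hv1
  have hs : (-1 : RatFunc K) ^ (r - 1 + c) = -(-1 : RatFunc K) ^ (r + c) := by
    rw [show r - 1 + c = r + c + (-1) by ring, zpow_add₀ (by norm_num : (-1 : RatFunc K) ≠ 0)]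
    norm_num
  rw [hs]
  have key : v ^ (e * r * (1 - c - m)) * qint v (m + 1 - r)
      + v ^ (e * (-c - 2 * m)) * (v ^ (e * (r - 1) * (1 - c - m)) * qint v r)
      = qint v (m + 1) * v ^ (e * r * (1 - c - (m + 1))) := by
    have hcore := coef_num hv0 he c m r
    simp only [qint]
    rw [div_eq_mul_inv, div_eq_mul_inv, div_eq_mul_inv]
    linear_combination (v - v⁻¹)⁻¹ * hcore
  linear_combination ((-1 : RatFunc K) ^ (r + c)) * key

end AuxLemmas

section MainLemmas

variable {K : Type*} [Field K] {v : RatFunc K}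
variable {A : Type*} [Ring A] [Algebra (RatFunc K) A]

/-- Recursion for the sum part. -/
lemma S_rec (hv0 : v ≠ 0) (hv1 : ∀ n : ℤ, n ≠ 0 → v ^ n ≠ 1)
    (Bi Bt : A) (c : ℤ) {e : ℤ} (he : e = 1 ∨ e = -1) (m : ℕ) :
    (∑ r ∈ Finset.range (m + 1),
        ((-1 : RatFunc K) ^ ((r : ℤ) + c) * v ^ (e * (r : ℤ) * (1 - c - (m : ℤ)))) •
          (dp v Bi (r : ℤ) * Bt * dp v Bi ((m : ℤ) - (r : ℤ)))) * Bi
      - v ^ (e * (-c - 2 * (m : ℤ))) •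
        (Bi * ∑ r ∈ Finset.range (m + 1),
          ((-1 : RatFunc K) ^ ((r : ℤ) + c) * v ^ (e * (r : ℤ) * (1 - c - (m : ℤ)))) •
            (dp v Bi (r : ℤ) * Bt * dp v Bi ((m : ℤ) - (r : ℤ))))
      = qint v ((m : ℤ) + 1) •
        ∑ r ∈ Finset.range (m + 1 + 1),
          ((-1 : RatFunc K) ^ ((r : ℤ) + c) * v ^ (e * (r : ℤ) * (1 - c - ((m : ℤ) + 1)))) •
            (dp v Bi (r : ℤ) * Bt * dp v Bi ((m : ℤ) + 1 - (r : ℤ))) := by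
  set F : ℕ → A := fun r =>
    ((-1 : RatFunc K) ^ ((r : ℤ) + c) * v ^ (e * (r : ℤ) * (1 - c - (m : ℤ))) *
      qint v ((m : ℤ) + 1 - (r : ℤ))) •
      (dp v Bi (r : ℤ) * Bt * dp v Bi ((m : ℤ) + 1 - (r : ℤ))) with hF
  set G : ℕ → A := fun r =>
    ((-1 : RatFunc K) ^ ((r : ℤ) - 1 + c) * v ^ (e * ((r : ℤ) - 1) * (1 - c - (m : ℤ))) *
        qint v (r : ℤ)) •
      (dp v Bi (r : ℤ) * Bt * dp v Bi ((m : ℤ) + 1 - (r : ℤ))) with hG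
  have step1 : (∑ r ∈ Finset.range (m + 1),
      ((-1 : RatFunc K) ^ ((r : ℤ) + c) * v ^ (e * (r : ℤ) * (1 - c - (m : ℤ)))) •
        (dp v Bi (r : ℤ) * Bt * dp v Bi ((m : ℤ) - (r : ℤ)))) * Bi
      = ∑ r ∈ Finset.range (m + 1 + 1), F r := by
    have hlast : F (m + 1) = 0 := by
      simp only [hF]
      rw [show (m : ℤ) + 1 - ((m + 1 : ℕ) : ℤ) = 0 by push_cast; ring, qint_zero, mul_zero,
        zero_smul]
    rw [Finset.sum_range_succ F (m + 1), hlast, add_zero, Finset.sum_mul]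
    refine Finset.sum_congr rfl ?_
    intro r hr
    rw [Finset.mem_range] at hr
    have hr' : (0:ℤ) ≤ (m : ℤ) - (r : ℤ) := by omega
    simp only [hF]
    rw [smul_mul_assoc,
      mul_assoc (dp v Bi (r : ℤ) * Bt) (dp v Bi ((m : ℤ) - (r : ℤ))) Bi,
      dp_mul_int hv0 hv1 Bi hr',
      show (m : ℤ) - (r : ℤ) + 1 = (m : ℤ) + 1 - (r : ℤ) by ring, mul_smul_comm, smul_smul]
  have step2 : Bi * (∑ r ∈ Finset.range (m + 1),
      ((-1 : RatFunc K) ^ ((r : ℤ) + c) * v ^ (e * (r : ℤ) * (1 - c - (m : ℤ)))) •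
        (dp v Bi (r : ℤ) * Bt * dp v Bi ((m : ℤ) - (r : ℤ))))
      = ∑ r ∈ Finset.range (m + 1 + 1), G r := by
    have h0 : G 0 = 0 := by
      simp only [hG]
      rw [show (((0:ℕ)) : ℤ) = 0 by norm_num, qint_zero, mul_zero, zero_smul]
    rw [Finset.sum_range_succ' G (m + 1), h0, add_zero, Finset.mul_sum]
    refine Finset.sum_congr rfl ?_
    intro r hr
    simp only [hG]
    rw [mul_smul_comm, ← mul_assoc Bi (dp v Bi (r : ℤ) * Bt) (dp v Bi ((m : ℤ) - (r : ℤ))),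
      ← mul_assoc Bi (dp v Bi (r : ℤ)) Bt, mul_dp_int hv0 hv1 Bi (by positivity),
      smul_mul_assoc, smul_mul_assoc, smul_smul]
    have harg : (m : ℤ) + 1 - ((r + 1 : ℕ) : ℤ) = (m : ℤ) - (r : ℤ) := by push_cast; ring
    rw [harg]
    congr 1
    push_cast
    ring_nf
  rw [step1, step2, Finset.smul_sum, Finset.smul_sum, ← Finset.sum_sub_distrib]
  refine Finset.sum_congr rfl ?_
  intro r _
  simp only [hF, hG]
  rw [smul_smul, smul_smul, ← sub_smul]
  congr 1
  exact coef_main hv0 hv1 he c (m : ℤ) (r : ℤ)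

/-- Triangular number as a sum. -/
def Tri (d : ℕ) : ℕ := ∑ i ∈ Finset.range d, (i + 1)

lemma Tri_succ (d : ℕ) : Tri (d + 1) = Tri d + (d + 1) := Finset.sum_range_succ _ _

lemma Tri_mul_two (d : ℕ) : (Tri d) * 2 = (d + 1) * d := by
  induction d with
  | zero => simp [Tri]
  | succ d ih => rw [Tri_succ, add_mul, ih]; ring

lemma qpoch_succ (a x : RatFunc K) (d : ℕ) :
    qpoch a x (d + 1) = qpoch a x d * (1 - a * x ^ d) := Finset.prod_range_succ _ _

lemma prodL (hv0 : v ≠ 0) (hv1 : ∀ n : ℤ, n ≠ 0 → v ^ n ≠ 1) (d : ℕ) :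
    qfact v d * (v - v⁻¹) ^ d
      = v ^ ((Tri d : ℤ)) * qpoch (v ^ (-2 : ℤ)) (v ^ (-2 : ℤ)) d := by
  induction d with
  | zero => simp [qfact, qpoch, Tri]
  | succ d ih =>
      have hT : ((Tri (d + 1) : ℕ) : ℤ) = (Tri d : ℤ) + ((d : ℤ) + 1) := by
        rw [Tri_succ]; push_cast; ring
      rw [qfact_succ, pow_succ, qpoch_succ, hT, zpow_add₀ hv0,
        show qfact v d * qint v ((d : ℤ) + 1) * ((v - v⁻¹) ^ d * (v - v⁻¹))
          = (qfact v d * (v - v⁻¹) ^ d) * (qint v ((d : ℤ) + 1) * (v - v⁻¹)) by ring,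
        ih, qint_w hv0 hv1]
      have key : v ^ ((d : ℤ) + 1) - v ^ (-((d : ℤ) + 1))
          = v ^ ((d : ℤ) + 1) * (1 - v ^ (-2 : ℤ) * (v ^ (-2 : ℤ)) ^ d) := by
        rw [mul_sub, mul_one, ← zpow_natCast (v ^ (-2 : ℤ)) d, ← zpow_mul,
          ← zpow_add₀ hv0, ← zpow_add₀ hv0,
          show (d : ℤ) + 1 + (-2 + -2 * (d : ℤ)) = -((d : ℤ) + 1) by ring]
      rw [key]
      ring

lemma prodL2 (hv0 : v ≠ 0) (hv1 : ∀ n : ℤ, n ≠ 0 → v ^ n ≠ 1) (d : ℕ) :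
    qfact v d * (v - v⁻¹) ^ d * v ^ ((Tri d : ℤ))
      = (-1 : RatFunc K) ^ d * qpoch (v ^ (2 : ℤ)) (v ^ (2 : ℤ)) d := by
  induction d with
  | zero => simp [qfact, qpoch, Tri]
  | succ d ih =>
      have hT : ((Tri (d + 1) : ℕ) : ℤ) = (Tri d : ℤ) + ((d : ℤ) + 1) := by
        rw [Tri_succ]; push_cast; ring
      rw [qfact_succ, pow_succ, qpoch_succ, hT, zpow_add₀ hv0,
        show qfact v d * qint v ((d : ℤ) + 1) * ((v - v⁻¹) ^ d * (v - v⁻¹)) *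
            (v ^ ((Tri d : ℤ)) * v ^ ((d : ℤ) + 1))
          = (qfact v d * (v - v⁻¹) ^ d * v ^ ((Tri d : ℤ))) *
            (qint v ((d : ℤ) + 1) * (v - v⁻¹) * v ^ ((d : ℤ) + 1)) by ring,
        ih, qint_w hv0 hv1, pow_succ]
      have key : (v ^ ((d : ℤ) + 1) - v ^ (-((d : ℤ) + 1))) * v ^ ((d : ℤ) + 1)
          = -(1 - v ^ (2 : ℤ) * (v ^ (2 : ℤ)) ^ d) := by
        rw [sub_mul, ← zpow_add₀ hv0, ← zpow_add₀ hv0,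
          show -((d : ℤ) + 1) + ((d : ℤ) + 1) = 0 by ring, zpow_zero,
          ← zpow_natCast (v ^ (2 : ℤ)) d, ← zpow_mul, ← zpow_add₀ hv0,
          show (2 : ℤ) + 2 * (d : ℤ) = (d : ℤ) + 1 + ((d : ℤ) + 1) by ring]
        ring
      linear_combination ((-1 : RatFunc K) ^ d * qpoch (v ^ (2 : ℤ)) (v ^ (2 : ℤ)) d) * key

lemma Pprod_succ (c : ℤ) (m : ℕ) (e : ℤ) (hm : 1 - c ≤ (m : ℤ)) :
    Pprod v c (m + 1) e = Pprod v c m e * (-(v ^ (e * (-c - 2 * (m : ℤ)))) + v ^ (c - 2)) := by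
  unfold Pprod
  have h1 : (c + ((m + 1 : ℕ) : ℤ) - 1).toNat = (c + (m : ℤ) - 1).toNat + 1 := by
    push_cast; omega
  rw [h1, Finset.prod_range_succ']
  congr 1
  · refine Finset.prod_congr rfl ?_
    intro j _
    push_cast
    ring_nf
  · push_cast
    ring_nf

lemma Qprod_succ (c : ℤ) (m : ℕ) (e : ℤ) (hm : 1 - c ≤ (m : ℤ)) :
    Qprod v c (m + 1) e = Qprod v c m e * (-(v ^ (e * (-c - 2 * (m : ℤ)))) + v ^ (2 - c)) := by
  unfold Qprod
  have h1 : (c + ((m + 1 : ℕ) : ℤ) - 1).toNat = (c + (m : ℤ) - 1).toNat + 1 := by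
    push_cast; omega
  rw [h1, Finset.prod_range_succ']
  congr 1
  · refine Finset.prod_congr rfl ?_
    intro j _
    push_cast
    ring_nf
  · push_cast
    ring_nf

set_option maxHeartbeats 1000000 in
lemma T_rec {e : ℤ} (hv0 : v ≠ 0) (hv1 : ∀ n : ℤ, n ≠ 0 → v ^ n ≠ 1)
    (Bi ki kt : A) (c : ℤ) (hc : c ≤ 0) (he : e = 1 ∨ e = -1)
    (hki : ki * Bi = v ^ (c - 2) • (Bi * ki))
    (hkt : kt * Bi = v ^ (2 - c) • (Bi * kt))
    (m : ℕ) (hm : 1 - c ≤ (m : ℤ)) :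
    ((qfact v (1 - c).toNat / qint v (m : ℤ) * (v - v⁻¹) ^ (-c - 1)) •
      ((Pprod v c m e * v ^ ((-c ^ 2 + 3 * c) / 2)) • (dp v Bi ((m : ℤ) - 1) * ki)
        - ((-1 : RatFunc K) ^ c * Qprod v c m e * v ^ ((c ^ 2 - c) / 2)) •
            (dp v Bi ((m : ℤ) - 1) * kt))) * Bi
      - v ^ (e * (-c - 2 * (m : ℤ))) •
        (Bi * ((qfact v (1 - c).toNat / qint v (m : ℤ) * (v - v⁻¹) ^ (-c - 1)) •
          ((Pprod v c m e * v ^ ((-c ^ 2 + 3 * c) / 2)) • (dp v Bi ((m : ℤ) - 1) * ki)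
            - ((-1 : RatFunc K) ^ c * Qprod v c m e * v ^ ((c ^ 2 - c) / 2)) •
                (dp v Bi ((m : ℤ) - 1) * kt))))
      = qint v ((m : ℤ) + 1) •
        ((qfact v (1 - c).toNat / qint v ((m : ℤ) + 1) * (v - v⁻¹) ^ (-c - 1)) •
          ((Pprod v c (m + 1) e * v ^ ((-c ^ 2 + 3 * c) / 2)) • (dp v Bi ((m : ℤ) + 1 - 1) * ki)
            - ((-1 : RatFunc K) ^ c * Qprod v c (m + 1) e * v ^ ((c ^ 2 - c) / 2)) •
                (dp v Bi ((m : ℤ) + 1 - 1) * kt))) := by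
  have h9 : (0 : ℤ) ≤ (m : ℤ) - 1 := by omega
  have hm0 : ((m : ℤ)) ≠ 0 := by omega
  have hm1 : ((m : ℤ)) + 1 ≠ 0 := by omega
  have hq : qint v (m : ℤ) ≠ 0 := qint_ne hv0 hv1 hm0
  have hq1 : qint v ((m : ℤ) + 1) ≠ 0 := qint_ne hv0 hv1 hm1
  have hq1' : qint v (1 + (m : ℤ)) ≠ 0 := by rw [add_comm]; exact hq1
  have hki' : dp v Bi ((m : ℤ) - 1) * ki * Bi
      = (v ^ (c - 2) * qint v (m : ℤ)) • (dp v Bi (m : ℤ) * ki) := by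
    rw [mul_assoc, hki, mul_smul_comm, ← mul_assoc, dp_mul_int hv0 hv1 Bi h9,
      show (m : ℤ) - 1 + 1 = (m : ℤ) by ring, smul_mul_assoc, smul_smul]
  have hkt' : dp v Bi ((m : ℤ) - 1) * kt * Bi
      = (v ^ (2 - c) * qint v (m : ℤ)) • (dp v Bi (m : ℤ) * kt) := by
    rw [mul_assoc, hkt, mul_smul_comm, ← mul_assoc, dp_mul_int hv0 hv1 Bi h9,
      show (m : ℤ) - 1 + 1 = (m : ℤ) by ring, smul_mul_assoc, smul_smul]
  have hki'' : Bi * (dp v Bi ((m : ℤ) - 1) * ki)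
      = qint v (m : ℤ) • (dp v Bi (m : ℤ) * ki) := by
    rw [← mul_assoc, mul_dp_int hv0 hv1 Bi h9,
      show (m : ℤ) - 1 + 1 = (m : ℤ) by ring, smul_mul_assoc]
  have hkt'' : Bi * (dp v Bi ((m : ℤ) - 1) * kt)
      = qint v (m : ℤ) • (dp v Bi (m : ℤ) * kt) := by
    rw [← mul_assoc, mul_dp_int hv0 hv1 Bi h9,
      show (m : ℤ) - 1 + 1 = (m : ℤ) by ring, smul_mul_assoc]
  rw [show (m : ℤ) + 1 - 1 = (m : ℤ) by ring]
  rw [smul_mul_assoc, sub_mul, smul_mul_assoc, smul_mul_assoc, hki', hkt',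
    mul_smul_comm, mul_sub Bi, mul_smul_comm, mul_smul_comm, hki'', hkt'']
  rw [Pprod_succ c m e hm, Qprod_succ c m e hm]
  simp only [smul_sub, smul_smul]
  rw [sub_sub_sub_comm, ← sub_smul, ← sub_smul]
  congr 1
  · congr 1
    linear_combination (qfact v (1 - c).toNat * (v - v⁻¹) ^ (-c - 1) * Pprod v c m e *
        v ^ ((-c ^ 2 + 3 * c) / 2) * (v ^ (c - 2) - v ^ (e * (-c - 2 * (m : ℤ))))) *
          mul_inv_cancel₀ hq
      - (qfact v (1 - c).toNat * (v - v⁻¹) ^ (-c - 1) * Pprod v c m e *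
        v ^ ((-c ^ 2 + 3 * c) / 2) * (v ^ (c - 2) - v ^ (e * (-c - 2 * (m : ℤ))))) *
          mul_inv_cancel₀ hq1
  · congr 1
    linear_combination (qfact v (1 - c).toNat * (v - v⁻¹) ^ (-c - 1) *
        ((-1 : RatFunc K) ^ c * Qprod v c m e) *
        v ^ ((c ^ 2 - c) / 2) * (v ^ (2 - c) - v ^ (e * (-c - 2 * (m : ℤ))))) *
          mul_inv_cancel₀ hq
      - (qfact v (1 - c).toNat * (v - v⁻¹) ^ (-c - 1) *
        ((-1 : RatFunc K) ^ c * Qprod v c m e) *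
        v ^ ((c ^ 2 - c) / 2) * (v ^ (2 - c) - v ^ (e * (-c - 2 * (m : ℤ))))) *
          mul_inv_cancel₀ hq1

set_option maxHeartbeats 1000000 in
lemma ytil_rec {e : ℤ} (hv0 : v ≠ 0) (hv1 : ∀ n : ℤ, n ≠ 0 → v ^ n ≠ 1)
    (Bi Bt ki kt : A) (c : ℤ) (hc : c ≤ 0) (he : e = 1 ∨ e = -1)
    (hki : ki * Bi = v ^ (c - 2) • (Bi * ki))
    (hkt : kt * Bi = v ^ (2 - c) • (Bi * kt))
    (m : ℕ) (hm : 1 - c ≤ (m : ℤ)) :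
    ytil v Bi Bt ki kt c m e * Bi
      - v ^ (e * (-c - 2 * (m : ℤ))) • (Bi * ytil v Bi Bt ki kt c m e)
      = qint v ((m : ℤ) + 1) • ytil v Bi Bt ki kt c (m + 1) e := by
  simp only [ytil]
  push_cast
  rw [sub_mul _ _ Bi, mul_sub Bi, smul_sub (v ^ (e * (-c - 2 * (m : ℤ)))),
    smul_sub (qint v ((m : ℤ) + 1)), ← S_rec hv0 hv1 Bi Bt c he m,
    ← T_rec hv0 hv1 Bi ki kt c hc he hki hkt m hm]
  rw [sub_sub_sub_comm]

lemma Pprod_base (c : ℤ) (hc : c ≤ 0) (e : ℤ) : Pprod v c (1 - c).toNat e = 1 := by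
  unfold Pprod
  have h : (c + (((1 - c).toNat : ℕ) : ℤ) - 1).toNat = 0 := by omega
  rw [h]
  simp

lemma Qprod_base (c : ℤ) (hc : c ≤ 0) (e : ℤ) : Qprod v c (1 - c).toNat e = 1 := by
  unfold Qprod
  have h : (c + (((1 - c).toNat : ℕ) : ℤ) - 1).toNat = 0 := by omega
  rw [h]
  simp

lemma ytil_base (hv0 : v ≠ 0) (hv1 : ∀ n : ℤ, n ≠ 0 → v ^ n ≠ 1)
    (Bi Bt ki kt : A) (c : ℤ) (hc : c ≤ 0) {e : ℤ} (he : e = 1 ∨ e = -1)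
    (hbkl : BKL v Bi Bt ki kt c) : ytil v Bi Bt ki kt c (1 - c).toNat e = 0 := by
  have hm0 : (((1 - c).toNat : ℕ) : ℤ) = 1 - c := by omega
  unfold ytil
  rw [sub_eq_zero]
  unfold BKL at hbkl
  simp only [hm0]
  have hz : ∀ r : ℕ, ((-1 : RatFunc K) ^ ((r : ℤ) + c) * v ^ (e * (r : ℤ) * (1 - c - (1 - c))))
      = (-1 : RatFunc K) ^ ((r : ℤ) + c) := by
    intro r
    rw [show e * (r : ℤ) * (1 - c - (1 - c)) = 0 by ring, zpow_zero, mul_one]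
  simp only [hz]
  rw [hbkl, show (1 : ℤ) - c - 1 = -c by ring, Pprod_base c hc e, Qprod_base c hc e]
  simp only [smul_sub, smul_smul]
  obtain ⟨d, hcd⟩ : ∃ d : ℕ, c = -(d : ℤ) := ⟨(-c).toNat, by omega⟩
  have hdc : (-c).toNat = d := by omega
  have h1c : (1 - c).toNat = d + 1 := by omega
  have hq1c : qint v (1 - c) ≠ 0 := qint_ne hv0 hv1 (by omega)
  have hw : v - v⁻¹ ≠ 0 := w_ne hv0 hv1
  have h2' : ((Tri d : ℤ)) * 2 = ((d : ℤ) + 1) * (d : ℤ) := by exact_mod_cast Tri_mul_two d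
  congr 1
  · congr 1
    rw [hdc, h1c, qfact_succ, show ((d : ℤ) + 1) = 1 - c by omega, mul_div_assoc,
      div_self hq1c, mul_one, show -c - 1 = ((d : ℕ) : ℤ) - 1 by omega, zpow_sub₀ hw,
      zpow_natCast, zpow_one]
    have hE : v ^ ((Tri d : ℤ)) * v ^ ((-c ^ 2 + 3 * c) / 2) = v ^ c := by
      rw [← zpow_add₀ hv0]
      congr 1
      have hdiv : (-c ^ 2 + 3 * c) / 2 = c - (Tri d : ℤ) := by
        rw [show -c ^ 2 + 3 * c = (c - (Tri d : ℤ)) * 2 by rw [hcd]; linear_combination h2',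
          Int.mul_ediv_cancel _ two_ne_zero]
      rw [hdiv]; ring
    linear_combination (-((v - v⁻¹)⁻¹ * v ^ ((-c ^ 2 + 3 * c) / 2))) * prodL hv0 hv1 d
      - ((v - v⁻¹)⁻¹ * qpoch (v ^ (-2 : ℤ)) (v ^ (-2 : ℤ)) d) * hE
  · congr 1
    rw [hdc, h1c, qfact_succ, show ((d : ℤ) + 1) = 1 - c by omega, mul_div_assoc,
      div_self hq1c, mul_one, show -c - 1 = ((d : ℕ) : ℤ) - 1 by omega, zpow_sub₀ hw,
      zpow_natCast, zpow_one]
    have hE2 : (c ^ 2 - c) / 2 = ((Tri d : ℕ) : ℤ) := by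
      rw [show c ^ 2 - c = ((Tri d : ℕ) : ℤ) * 2 by rw [hcd]; linear_combination -h2',
        Int.mul_ediv_cancel _ two_ne_zero]
    have hn2 : ((-1 : RatFunc K) ^ (d : ℕ)) * ((-1 : RatFunc K) ^ (d : ℕ)) = 1 := by
      rw [← mul_pow]; norm_num
    have hneg : (-1 : RatFunc K) ^ c = (-1 : RatFunc K) ^ (d : ℕ) := by
      rw [hcd, zpow_neg, zpow_natCast]
      exact inv_eq_of_mul_eq_one_right hn2
    rw [hE2, hneg]
    linear_combination (-((v - v⁻¹)⁻¹ * (-1 : RatFunc K) ^ (d : ℕ))) * prodL2 hv0 hv1 d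
      - ((v - v⁻¹)⁻¹ * qpoch (v ^ (2 : ℤ)) (v ^ (2 : ℤ)) d) * hn2

end MainLemmas

/-- (Theorem 3.2, Serre–Lusztig relations for i ≠ τi.) Assuming the BKL relation,
ỹ_{m,e} = 0 for every integer m ≥ 1−c and every e ∈ {1, −1}. -/
theorem stmt4 {K : Type*} [Field K] [CharZero K]
    {A : Type*} [Ring A] [Algebra (RatFunc K) A]
    (ε : ℕ) (hε : 0 < ε) (v : RatFunc K) (hv : v = RatFunc.X ^ ε)
    (Bi Bt ki kt : A) (c : ℤ) (hc : c ≤ 0)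
    (hki : ki * Bi = v ^ (c - 2) • (Bi * ki))
    (hkt : kt * Bi = v ^ (2 - c) • (Bi * kt))
    (hbkl : BKL v Bi Bt ki kt c) :
    ∀ (m : ℕ), 1 - c ≤ (m : ℤ) → ∀ e : ℤ, e = 1 ∨ e = -1 →
      ytil v Bi Bt ki kt c m e = 0 := by
  intro m hm e he
  have hv0 : v ≠ 0 := by rw [hv]; exact pow_ne_zero _ RatFunc.X_ne_zero
  have hv1 : ∀ n : ℤ, n ≠ 0 → v ^ n ≠ 1 := v_zpow_ne_one ε hε hv
  have key : ∀ n : ℕ, (1 - c).toNat ≤ n → ytil v Bi Bt ki kt c n e = 0 := by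
    intro n hn
    induction n, hn using Nat.le_induction with
    | base => exact ytil_base hv0 hv1 Bi Bt ki kt c hc he hbkl
    | succ n hn ih =>
        have hrec := ytil_rec hv0 hv1 Bi Bt ki kt c hc he hki hkt n (by omega)
        rw [ih, zero_mul, mul_zero, smul_zero, sub_zero] at hrec
        have hq : qint v ((n : ℤ) + 1) ≠ 0 := qint_ne hv0 hv1 (by omega)
        have h2 := congrArg (fun x => (qint v ((n : ℤ) + 1))⁻¹ • x) hrec
        simpa [smul_smul, inv_mul_cancel₀ hq] using h2.symm
  exact key m (by omega)
end
end

section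
/- (Theorem 3.2, explicit form for e = −1.) Assume in addition the BKL relation: ∑_{n=0}^{1−c} (−1)^{n+c} B_i^{(n)} B_{τi} B_i^{(1−c−n)} = (q_i − q_i^{-1})^{-1} ( q_i^{c} (q_i^{-2}; q_i^{-2})_{−c} B_i^{(−c)} k̃_i − (q_i^{2}; q_i^{2})_{−c} B_i^{(−c)} k̃_{τi} ), where (a; x)_n = ∏_{k=0}^{n−1} (1 − a x^k). Then for every integer m > 1−c: ∑_{r+s=m, r,s≥0} (−1)^{r+c} q_i^{−r(1−c−m)} B_i^{(r)} B_{τi} B_i^{(s)} = (−1)^{m+c+1} [m−1]! (q_i − q_i^{-1})^{m−2} q_i^{((m−1)(m−2+2c)/2) + c} B_i^{(m−1)} k̃_i. -/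
noncomputable section

set_option maxHeartbeats 1000000
namespace Stmt7Aux
set_option linter.unusedSectionVars false

variable {K : Type*} [Field K] [CharZero K]

lemma zpc (v : RatFunc K) {a b : ℤ} (h : a = b) : v ^ a = v ^ b := by rw [h]

lemma X_pow_ne_one (k : ℕ) (hk : k ≠ 0) : (RatFunc.X : RatFunc K) ^ k ≠ 1 := by
  intro h
  have h2 : (algebraMap (Polynomial K) (RatFunc K)) (Polynomial.X ^ k)
      = algebraMap (Polynomial K) (RatFunc K) 1 := by
    simpa [map_pow, RatFunc.algebraMap_X] using h
  have h3 : (Polynomial.X : Polynomial K) ^ k = 1 := RatFunc.algebraMap_injective K h2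
  have := congrArg Polynomial.natDegree h3
  simp [Polynomial.natDegree_X_pow] at this
  exact hk this

lemma X_zpow_ne_one (n : ℤ) (hn : n ≠ 0) : (RatFunc.X : RatFunc K) ^ n ≠ 1 := by
  rcases lt_or_gt_of_ne hn with h | h
  · intro he
    have : (RatFunc.X : RatFunc K) ^ (-n) = 1 := by
      have := congrArg (·⁻¹) he
      simpa [← zpow_neg] using this
    rw [show -n = ((-n).toNat : ℤ) by omega, zpow_natCast] at this
    exact X_pow_ne_one (-n).toNat (by omega) this
  · intro he
    rw [show n = (n.toNat : ℤ) by omega, zpow_natCast] at he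
    exact X_pow_ne_one n.toNat (by omega) he

section V
variable {v : RatFunc K} (hone : ∀ n : ℤ, n ≠ 0 → v ^ n ≠ 1) (hv0 : v ≠ 0)

include hone hv0 in
lemma d_ne : v - v⁻¹ ≠ 0 := by
  rw [sub_ne_zero]
  intro h
  apply hone 2 (by norm_num)
  rw [show (2:ℤ) = 1 + 1 by norm_num, zpow_add₀ hv0, zpow_one]
  nth_rewrite 2 [h]
  exact mul_inv_cancel₀ hv0

include hone hv0 in
lemma qint_ne {n : ℤ} (hn : n ≠ 0) : qint v n ≠ 0 := by
  apply div_ne_zero _ (d_ne hone hv0)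
  rw [sub_ne_zero]
  intro h
  apply hone (2*n) (by omega)
  have : v ^ (2*n) = v ^ n * v ^ n := by
    rw [← zpow_add₀ hv0]; exact zpc v (by ring)
  rw [this]
  nth_rewrite 2 [h]
  rw [← zpow_add₀ hv0]
  simp

lemma qint_zero : qint v 0 = 0 := by simp [qint]

include hone hv0 in
lemma qfact_ne (n : ℕ) : qfact v n ≠ 0 := by
  rw [qfact]
  apply Finset.prod_ne_zero_iff.mpr
  intro k _
  exact qint_ne hone hv0 (by omega)

lemma qfact_succ (n : ℕ) : qfact v (n+1) = qfact v n * qint v ((n:ℤ)+1) :=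
  Finset.prod_range_succ _ n

include hone hv0 in
lemma d_mul_qint (N : ℤ) : (v - v⁻¹) * qint v N = v ^ N - v ^ (-N) := by
  rw [qint, mul_div_assoc', mul_div_cancel_left₀ _ (d_ne hone hv0)]

variable {A : Type*} [Ring A] [Algebra (RatFunc K) A]

lemma dp_natCast (x : A) (n : ℕ) : dp v x (n : ℤ) = (qfact v n)⁻¹ • x ^ n := by
  simp [dp]

include hone hv0 in
lemma dp_mul (x : A) (a : ℤ) (ha : 0 ≤ a) :
    dp v x a * x = qint v (a+1) • dp v x (a+1) := by
  lift a to ℕ using ha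
  have h1 : dp v x ((a:ℤ)+1) = (qfact v (a+1))⁻¹ • x^(a+1) := by
    rw [show (a:ℤ)+1 = ((a+1:ℕ):ℤ) by push_cast; ring]; exact dp_natCast x (a+1)
  rw [dp_natCast, h1, smul_mul_assoc, ← pow_succ, smul_smul]
  congr 1
  rw [qfact_succ]
  field_simp [qint_ne hone hv0 (show (a:ℤ)+1 ≠ 0 by omega), qfact_ne hone hv0 a]

include hone hv0 in
lemma mul_dp (x : A) (a : ℤ) (ha : 0 ≤ a) :
    x * dp v x a = qint v (a+1) • dp v x (a+1) := by
  lift a to ℕ using ha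
  have h1 : dp v x ((a:ℤ)+1) = (qfact v (a+1))⁻¹ • x^(a+1) := by
    rw [show (a:ℤ)+1 = ((a+1:ℕ):ℤ) by push_cast; ring]; exact dp_natCast x (a+1)
  rw [dp_natCast, h1, mul_smul_comm, ← pow_succ', smul_smul]
  congr 1
  rw [qfact_succ]
  field_simp [qint_ne hone hv0 (show (a:ℤ)+1 ≠ 0 by omega), qfact_ne hone hv0 a]

include hone hv0 in
lemma key (r n c : ℤ) :
    qint v (n+1) * ((-1:RatFunc K)^(r+c) * v^(r*(n+c))) =
      ((-1:RatFunc K)^(r+c) * v^(r*(n+c-1))) * qint v (n+1-r)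
      - v^(2*n+c) * (((-1:RatFunc K)^((r-1)+c) * v^((r-1)*(n+c-1))) * qint v r) := by
  have hm1 : ((-1:RatFunc K))^((r-1)+c) = -((-1:RatFunc K))^(r+c) := by
    rw [show (r-1)+c = (r+c)+(-1) by ring, zpow_add₀ (by norm_num : (-1:RatFunc K) ≠ 0)]
    norm_num
  have e1 : v^(n+1) * v^(r*(n+c)) = v^(2*n+c) * (v^((r-1)*(n+c-1)) * v^(r)) := by
    rw [← zpow_add₀ hv0, ← zpow_add₀ hv0, ← zpow_add₀ hv0]
    exact zpc v (by ring)
  have e2 : v^(-(n+1)) * v^(r*(n+c)) = v^(r*(n+c-1)) * v^(-(n+1-r)) := by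
    rw [← zpow_add₀ hv0, ← zpow_add₀ hv0]
    exact zpc v (by ring)
  have e3 : v^(2*n+c) * (v^((r-1)*(n+c-1)) * v^(-r)) = v^(r*(n+c-1)) * v^(n+1-r) := by
    rw [← zpow_add₀ hv0, ← zpow_add₀ hv0, ← zpow_add₀ hv0]
    exact zpc v (by ring)
  rw [hm1, qint, qint, qint]
  set s := ((-1:RatFunc K))^(r+c)
  linear_combination (s/(v-v⁻¹)) * e1 - (s/(v-v⁻¹)) * e2 + (s/(v-v⁻¹)) * e3

end V

variable {A : Type*} [Ring A] [Algebra (RatFunc K) A]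

/-- The sum `S_m`. -/
def Ss (v : RatFunc K) (Bi Bt : A) (c : ℤ) (m : ℕ) : A :=
  ∑ r ∈ Finset.range (m+1),
    ((-1:RatFunc K)^((r:ℤ)+c) * v^((r:ℤ)*((m:ℤ)+c-1))) •
      (dp v Bi (r:ℤ) * Bt * dp v Bi ((m:ℤ)-(r:ℤ)))

lemma dpc (v : RatFunc K) (x : A) {a b : ℤ} (h : a = b) : dp v x a = dp v x b := by rw [h]

section V2
variable {v : RatFunc K} (hone : ∀ n : ℤ, n ≠ 0 → v ^ n ≠ 1) (hv0 : v ≠ 0)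

include hone hv0 in
lemma Ss_rec (Bi Bt : A) (c : ℤ) (n : ℕ) :
    qint v ((n:ℤ)+1) • Ss v Bi Bt c (n+1)
      = Ss v Bi Bt c n * Bi - v^(2*(n:ℤ)+c) • (Bi * Ss v Bi Bt c n) := by
  have E1 : qint v ((n:ℤ)+1) • Ss v Bi Bt c (n+1)
      = ∑ r ∈ Finset.range (n+2),
          (qint v ((n:ℤ)+1) * ((-1:RatFunc K)^((r:ℤ)+c) * v^((r:ℤ)*((n:ℤ)+c)))) •
            (dp v Bi (r:ℤ) * Bt * dp v Bi ((n:ℤ)+1-(r:ℤ))) := by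
    rw [Ss, Finset.smul_sum]
    apply Finset.sum_congr rfl
    intro r _
    rw [smul_smul,
      show ((r:ℤ)*(((n+1:ℕ):ℤ)+c-1)) = ((r:ℤ)*((n:ℤ)+c)) by push_cast; ring,
      show (((n+1:ℕ):ℤ)-(r:ℤ)) = ((n:ℤ)+1-(r:ℤ)) by push_cast; ring]
  have E2 : Ss v Bi Bt c n * Bi
      = ∑ r ∈ Finset.range (n+2),
          (((-1:RatFunc K)^((r:ℤ)+c) * v^((r:ℤ)*((n:ℤ)+c-1))) * qint v ((n:ℤ)+1-(r:ℤ))) •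
            (dp v Bi (r:ℤ) * Bt * dp v Bi ((n:ℤ)+1-(r:ℤ))) := by
    rw [Finset.sum_range_succ]
    have hz : qint v ((n:ℤ)+1-((n+1:ℕ):ℤ)) = 0 := by
      rw [show (n:ℤ)+1-((n+1:ℕ):ℤ) = 0 by push_cast; ring]
      exact qint_zero
    rw [hz, mul_zero, zero_smul, add_zero, Ss, Finset.sum_mul]
    apply Finset.sum_congr rfl
    intro r hr
    have hr' : (r:ℤ) ≤ (n:ℤ) := by
      have := Finset.mem_range.mp hr; omega
    rw [smul_mul_assoc, mul_assoc, dp_mul hone hv0 Bi ((n:ℤ)-(r:ℤ)) (by omega),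
      mul_smul_comm, smul_smul,
      show (n:ℤ)-(r:ℤ)+1 = (n:ℤ)+1-(r:ℤ) by ring]
  have E3 : v^(2*(n:ℤ)+c) • (Bi * Ss v Bi Bt c n)
      = ∑ r ∈ Finset.range (n+2),
          (v^(2*(n:ℤ)+c) * (((-1:RatFunc K)^(((r:ℤ)-1)+c) * v^(((r:ℤ)-1)*((n:ℤ)+c-1))) * qint v (r:ℤ))) •
            (dp v Bi (r:ℤ) * Bt * dp v Bi ((n:ℤ)+1-(r:ℤ))) := by
    rw [Finset.sum_range_succ']
    have hz : qint v ((0:ℕ):ℤ) = 0 := by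
      rw [show ((0:ℕ):ℤ) = 0 by norm_num]; exact qint_zero
    rw [hz, mul_zero, mul_zero, zero_smul, add_zero, Ss, Finset.mul_sum, Finset.smul_sum]
    apply Finset.sum_congr rfl
    intro r _
    rw [show ((r+1:ℕ):ℤ) = (r:ℤ)+1 by push_cast; ring,
      show (n:ℤ)+1-((r:ℤ)+1) = (n:ℤ)-(r:ℤ) by ring,
      mul_smul_comm, smul_smul,
      show Bi * (dp v Bi (r:ℤ) * Bt * dp v Bi ((n:ℤ)-(r:ℤ)))
        = Bi * dp v Bi (r:ℤ) * Bt * dp v Bi ((n:ℤ)-(r:ℤ)) by noncomm_ring,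
      mul_dp hone hv0 Bi (r:ℤ) (by omega),
      smul_mul_assoc, smul_mul_assoc, smul_smul]
    congr 1
    ring
  rw [E1, E2, E3, ← Finset.sum_sub_distrib]
  apply Finset.sum_congr rfl
  intro r _
  rw [← sub_smul]
  congr 1
  exact key hone hv0 (r:ℤ) (n:ℤ) c

end V2

/-- The closed-form constant. -/
def Cc (v : RatFunc K) (c : ℤ) (m : ℕ) : RatFunc K :=
  (-1:RatFunc K)^((m:ℤ)+c+1) * qfact v (m-1) * (v-v⁻¹)^((m:ℤ)-2) *
    v^(((m:ℤ)-1)*((m:ℤ)-2+2*c)/2 + c)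

section V3
variable {v : RatFunc K} (hone : ∀ n : ℤ, n ≠ 0 → v ^ n ≠ 1) (hv0 : v ≠ 0)

lemma two_dvd_quad (M c : ℤ) : 2 ∣ ((M-1)*(M-2+2*c)) := by
  obtain ⟨k, hk⟩ := Int.even_mul_succ_self (M-2)
  exact ⟨k + c*(M-1), by linear_combination hk⟩

include hone hv0 in
lemma Cstep (c : ℤ) (m : ℕ) (hm : 1 ≤ m) :
    Cc v c (m+1) * qint v ((m:ℤ)+1)
      = Cc v c m * qint v (m:ℤ) * (v^(c-2) - v^(2*(m:ℤ)+c)) := by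
  have hd := d_ne hone hv0
  have hE : (((m:ℤ)+1)-1)*(((m:ℤ)+1)-2+2*c)/2 + c
      = (((m:ℤ)-1)*((m:ℤ)-2+2*c)/2 + c) + ((m:ℤ)+c-1) := by
    obtain ⟨t, ht⟩ := two_dvd_quad (m:ℤ) c
    have h2 : (((m:ℤ)+1)-1)*(((m:ℤ)+1)-2+2*c) = ((m:ℤ)-1)*((m:ℤ)-2+2*c) + 2*((m:ℤ)+c-1) := by
      ring
    omega
  have hqf : qfact v ((m+1)-1) = qfact v (m-1) * qint v (m:ℤ) := by
    rw [show (m+1)-1 = (m-1)+1 by omega, qfact_succ,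
      show ((m-1:ℕ):ℤ)+1 = (m:ℤ) by omega]
  have hs : (-1:RatFunc K)^((((m+1):ℕ):ℤ)+c+1) = (-1) * (-1:RatFunc K)^((m:ℤ)+c+1) := by
    rw [show ((((m+1):ℕ):ℤ)+c+1) = ((m:ℤ)+c+1)+1 by push_cast; ring,
      zpow_add₀ (by norm_num : (-1:RatFunc K) ≠ 0), zpow_one]
    ring
  have hd3 : (v-v⁻¹)^((((m+1):ℕ):ℤ)-2) = (v-v⁻¹)^((m:ℤ)-2) * (v-v⁻¹) := by
    rw [show ((((m+1):ℕ):ℤ)-2) = ((m:ℤ)-2)+1 by push_cast; ring, zpow_add₀ hd, zpow_one]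
  have hv4 : v^(((((m+1):ℕ):ℤ)-1)*((((m+1):ℕ):ℤ)-2+2*c)/2 + c)
      = v^(((m:ℤ)-1)*((m:ℤ)-2+2*c)/2+c) * v^((m:ℤ)+c-1) := by
    rw [show ((((m+1):ℕ):ℤ)) = (m:ℤ)+1 by push_cast; ring, hE, zpow_add₀ hv0]
  have a1 : v^((m:ℤ)+1) * v^((m:ℤ)+c-1) = v^(2*(m:ℤ)+c) := by
    rw [← zpow_add₀ hv0]; exact zpc v (by ring)
  have a2 : v^(-((m:ℤ)+1)) * v^((m:ℤ)+c-1) = v^(c-2) := by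
    rw [← zpow_add₀ hv0]; exact zpc v (by ring)
  have hf5 : v^(c-2) - v^(2*(m:ℤ)+c) = -((v-v⁻¹) * qint v ((m:ℤ)+1) * v^((m:ℤ)+c-1)) := by
    rw [← a1, ← a2, d_mul_qint hone hv0]
    ring
  rw [Cc, Cc, hqf, hs, hd3, hv4, hf5]
  ring

include hone hv0 in
lemma Ss_step (Bi Bt ki : A) (c : ℤ) (hki : ki * Bi = v ^ (c - 2) • (Bi * ki))
    (m : ℕ) (hm : 1 ≤ m)
    (h : Ss v Bi Bt c m = Cc v c m • (dp v Bi ((m:ℤ)-1) * ki)) :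
    Ss v Bi Bt c (m+1) = Cc v c (m+1) • (dp v Bi (((m+1:ℕ):ℤ)-1) * ki) := by
  have hq := qint_ne hone hv0 (show (m:ℤ)+1 ≠ 0 by omega)
  have hrec := Ss_rec hone hv0 Bi Bt c m
  rw [h] at hrec
  have h1 : (Cc v c m • (dp v Bi ((m:ℤ)-1) * ki)) * Bi
      = (Cc v c m * (v^(c-2) * qint v (m:ℤ))) • (dp v Bi (m:ℤ) * ki) := by
    rw [smul_mul_assoc, mul_assoc, hki, mul_smul_comm, ← mul_assoc,
      dp_mul hone hv0 Bi ((m:ℤ)-1) (by omega),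
      show (m:ℤ)-1+1 = (m:ℤ) by ring, smul_mul_assoc, smul_smul, smul_smul, mul_assoc]
  have h2 : Bi * (Cc v c m • (dp v Bi ((m:ℤ)-1) * ki))
      = (Cc v c m * qint v (m:ℤ)) • (dp v Bi (m:ℤ) * ki) := by
    rw [mul_smul_comm, ← mul_assoc, mul_dp hone hv0 Bi ((m:ℤ)-1) (by omega),
      show (m:ℤ)-1+1 = (m:ℤ) by ring, smul_mul_assoc, smul_smul]
  rw [h1, h2, smul_smul, ← sub_smul] at hrec
  have h3 := congrArg (fun z => (qint v ((m:ℤ)+1))⁻¹ • z) hrec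
  rw [inv_smul_smul₀ hq, smul_smul] at h3
  rw [h3, show ((m+1:ℕ):ℤ)-1 = (m:ℤ) by push_cast; ring]
  congr 1
  rw [inv_mul_eq_div, div_eq_iff hq, Cstep hone hv0 c m hm]
  ring

include hone hv0 in
lemma poch_eq (n : ℕ) :
    qpoch (v^(-2:ℤ)) (v^(-2:ℤ)) n
      = v^(-(((n:ℤ)*((n:ℤ)+1))/2)) * (v-v⁻¹)^n * qfact v n := by
  induction n with
  | zero => simp [qpoch, qfact]
  | succ k ih =>
    rw [qpoch, Finset.prod_range_succ, ← qpoch, ih, qfact_succ]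
    have b0 : v^(-2:ℤ) * (v^(-2:ℤ))^k = v^(-2*((k:ℤ)+1)) := by
      rw [← zpow_natCast (v^(-2:ℤ)) k, ← zpow_mul, ← zpow_add₀ hv0]
      exact zpc v (by ring)
    have b1 : v^(-((k:ℤ)+1)) * v^((k:ℤ)+1) = 1 := by
      rw [← zpow_add₀ hv0, show -((k:ℤ)+1)+((k:ℤ)+1) = 0 by ring, zpow_zero]
    have b2 : v^(-((k:ℤ)+1)) * v^(-((k:ℤ)+1)) = v^(-2*((k:ℤ)+1)) := by
      rw [← zpow_add₀ hv0]; exact zpc v (by ring)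
    have hx : (1 - v^(-2:ℤ) * (v^(-2:ℤ))^k) = v^(-((k:ℤ)+1)) * ((v-v⁻¹) * qint v ((k:ℤ)+1)) := by
      rw [b0, d_mul_qint hone hv0]
      linear_combination b2 - b1
    have hEE : v^(-(((k:ℤ)+1)*(((k:ℤ)+1)+1)/2)) = v^(-(((k:ℤ)*((k:ℤ)+1))/2)) * v^(-((k:ℤ)+1)) := by
      rw [← zpow_add₀ hv0]
      apply zpc
      obtain ⟨t, ht⟩ := Int.even_mul_succ_self (k:ℤ)
      have h2 : ((k:ℤ)+1)*(((k:ℤ)+1)+1) = (k:ℤ)*((k:ℤ)+1) + 2*((k:ℤ)+1) := by ring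
      omega
    rw [hx, show ((k+1:ℕ):ℤ) = (k:ℤ)+1 by push_cast; ring, hEE, pow_succ]
    ring

end V3

/-- The BKL relation (copy of the pinned definition, for auxiliary use). -/
def BKL' {A : Type*} [Ring A] [Algebra (RatFunc K) A]
    (v : RatFunc K) (Bi Bt ki kt : A) (c : ℤ) : Prop :=
  ∑ n ∈ Finset.range ((1 - c).toNat + 1),
      ((-1 : RatFunc K) ^ ((n : ℤ) + c)) • (dp v Bi (n : ℤ) * Bt * dp v Bi (1 - c - (n : ℤ)))
    = (v - v⁻¹)⁻¹ •
        ((v ^ c * qpoch (v ^ (-2 : ℤ)) (v ^ (-2 : ℤ)) (-c).toNat) • (dp v Bi (-c) * ki)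
          - qpoch (v ^ (2 : ℤ)) (v ^ (2 : ℤ)) (-c).toNat • (dp v Bi (-c) * kt))

section V4
variable {v : RatFunc K} (hone : ∀ n : ℤ, n ≠ 0 → v ^ n ≠ 1) (hv0 : v ≠ 0)

include hone hv0 in
lemma Ss_base (Bi Bt ki kt : A) (c : ℤ) (hc : c ≤ 0)
    (hki : ki * Bi = v ^ (c - 2) • (Bi * ki))
    (hkt : kt * Bi = v ^ (2 - c) • (Bi * kt))
    (hbkl : BKL' v Bi Bt ki kt c) :
    Ss v Bi Bt c ((1-c).toNat + 1)
      = Cc v c ((1-c).toNat + 1) • (dp v Bi (((((1-c).toNat+1):ℕ):ℤ)-1) * ki) := by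
  have hd := d_ne hone hv0
  set p : ℕ := (1-c).toNat with hpdef
  have hp : (p:ℤ) = 1-c := by omega
  set n : ℕ := (-c).toNat with hndef
  have hn : (n:ℤ) = -c := by omega
  rw [BKL'] at hbkl
  set P : RatFunc K := v ^ c * qpoch (v ^ (-2 : ℤ)) (v ^ (-2 : ℤ)) (-c).toNat with hP
  set Q : RatFunc K := qpoch (v ^ (2 : ℤ)) (v ^ (2 : ℤ)) (-c).toNat with hQ
  have h0 : Ss v Bi Bt c p
      = (v-v⁻¹)⁻¹ • (P • (dp v Bi (-c) * ki) - Q • (dp v Bi (-c) * kt)) := by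
    rw [← hbkl, Ss]
    apply Finset.sum_congr rfl
    intro r _
    rw [show (r:ℤ)*((p:ℤ)+c-1) = 0 by rw [hp]; ring, zpow_zero, mul_one,
      show (p:ℤ)-(r:ℤ) = 1-c-(r:ℤ) by rw [hp]]
  have hrec := Ss_rec hone hv0 Bi Bt c p
  rw [h0] at hrec
  have e1 : (dp v Bi (-c) * ki) * Bi = (v^(c-2) * qint v (1-c)) • (dp v Bi (1-c) * ki) := by
    rw [mul_assoc, hki, mul_smul_comm, ← mul_assoc, dp_mul hone hv0 Bi (-c) (by omega),
      show -c+1 = 1-c by ring, smul_mul_assoc, smul_smul]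
  have e2 : (dp v Bi (-c) * kt) * Bi = (v^(2-c) * qint v (1-c)) • (dp v Bi (1-c) * kt) := by
    rw [mul_assoc, hkt, mul_smul_comm, ← mul_assoc, dp_mul hone hv0 Bi (-c) (by omega),
      show -c+1 = 1-c by ring, smul_mul_assoc, smul_smul]
  have e3 : Bi * (dp v Bi (-c) * ki) = qint v (1-c) • (dp v Bi (1-c) * ki) := by
    rw [← mul_assoc, mul_dp hone hv0 Bi (-c) (by omega), show -c+1 = 1-c by ring,
      smul_mul_assoc]
  have e4 : Bi * (dp v Bi (-c) * kt) = qint v (1-c) • (dp v Bi (1-c) * kt) := by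
    rw [← mul_assoc, mul_dp hone hv0 Bi (-c) (by omega), show -c+1 = 1-c by ring,
      smul_mul_assoc]
  rw [smul_mul_assoc, sub_mul, smul_mul_assoc, smul_mul_assoc, e1, e2,
    mul_smul_comm, mul_sub, mul_smul_comm, mul_smul_comm, e3, e4] at hrec
  simp only [smul_sub, smul_smul] at hrec
  rw [sub_sub_sub_comm, ← sub_smul, ← sub_smul] at hrec
  have hkt0 : ((v - v⁻¹)⁻¹ * (Q * (v ^ (2 - c) * qint v (1 - c))))
      - (v ^ (2 * (p:ℤ) + c) * ((v - v⁻¹)⁻¹ * (Q * qint v (1 - c)))) = 0 := by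
    rw [show 2*(p:ℤ)+c = 2-c by omega]
    ring
  rw [hkt0, zero_smul, sub_zero] at hrec
  have hq := qint_ne hone hv0 (show (p:ℤ)+1 ≠ 0 by omega)
  have h3 := congrArg (fun z => (qint v ((p:ℤ)+1))⁻¹ • z) hrec
  rw [inv_smul_smul₀ hq, smul_smul] at h3
  rw [h3, show ((p+1:ℕ):ℤ)-1 = 1-c by push_cast; omega]
  congr 1
  have hq2 : qint v (2-c) ≠ 0 := qint_ne hone hv0 (by omega)
  have hvd : v^(c-2) = v^(2-c) - (v-v⁻¹) * qint v (2-c) := by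
    have := d_mul_qint hone hv0 (2-c)
    rw [show -(2-c) = c-2 by ring] at this
    linear_combination this
  obtain ⟨t, ht⟩ := Int.even_mul_succ_self (n:ℤ)
  have h1 : ((((p+1):ℕ):ℤ)-1)*((((p+1):ℕ):ℤ)-2+2*c) = -((n:ℤ)*((n:ℤ)+1)) := by
    push_cast
    rw [hp, hn]
    ring
  have hmerge : v^((((((p+1):ℕ):ℤ)-1)*((((p+1):ℕ):ℤ)-2+2*c))/2 + c)
      = v^c * v^(-(((n:ℤ)*((n:ℤ)+1))/2)) := by
    rw [← zpow_add₀ hv0]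
    apply zpc
    omega
  have hcoef : (v - v⁻¹)⁻¹ * (P * (v ^ (c - 2) * qint v (1 - c)))
      - v ^ (2 * (p:ℤ) + c) * ((v - v⁻¹)⁻¹ * (P * qint v (1 - c)))
      = -(P * qint v (1-c) * qint v (2-c)) := by
    rw [show 2*(p:ℤ)+c = 2-c by omega]
    have g1 : (v-v⁻¹) * (v-v⁻¹)⁻¹ = 1 := mul_inv_cancel₀ hd
    linear_combination ((v-v⁻¹)⁻¹ * P * qint v (1-c)) * hvd
      - (P * qint v (1-c) * qint v (2-c)) * g1
  rw [hcoef, show ((p:ℤ)+1) = 2-c by omega, inv_mul_eq_div, div_eq_iff hq2]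
  rw [hP, poch_eq hone hv0, Cc, hmerge,
    show ((((p+1):ℕ):ℤ)+c+1) = 3 by push_cast; omega,
    show ((p+1)-1 : ℕ) = n+1 by omega,
    qfact_succ, show ((n:ℕ):ℤ)+1 = 1-c by omega,
    show ((((p+1):ℕ):ℤ)-2) = ((n:ℕ):ℤ) by push_cast; omega, zpow_natCast,
    show (-1:RatFunc K)^(3:ℤ) = -1 by norm_num]
  ring

include hone hv0 in
lemma Ss_main (Bi Bt ki kt : A) (c : ℤ) (hc : c ≤ 0)
    (hki : ki * Bi = v ^ (c - 2) • (Bi * ki))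
    (hkt : kt * Bi = v ^ (2 - c) • (Bi * kt))
    (hbkl : BKL' v Bi Bt ki kt c) (k : ℕ) :
    Ss v Bi Bt c ((1-c).toNat + 1 + k)
      = Cc v c ((1-c).toNat + 1 + k) •
          (dp v Bi (((((1-c).toNat + 1 + k):ℕ):ℤ)-1) * ki) := by
  induction k with
  | zero => exact Ss_base hone hv0 Bi Bt ki kt c hc hki hkt hbkl
  | succ j ih =>
    exact Ss_step hone hv0 Bi Bt ki c hki ((1-c).toNat + 1 + j) (by omega) ih

end V4
end Stmt7Aux

open Stmt7Aux in
theorem stmt7' {K : Type*} [Field K] [CharZero K]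
    {A : Type*} [Ring A] [Algebra (RatFunc K) A]
    (ε : ℕ) (hε : 0 < ε) (v : RatFunc K) (hv : v = RatFunc.X ^ ε)
    (Bi Bt ki kt : A) (c : ℤ) (hc : c ≤ 0)
    (hki : ki * Bi = v ^ (c - 2) • (Bi * ki))
    (hkt : kt * Bi = v ^ (2 - c) • (Bi * kt))
    (hbkl : BKL' v Bi Bt ki kt c)
    (m : ℕ) (hm : 1 - c < (m : ℤ)) :
    ∑ r ∈ Finset.range (m + 1),
        ((-1 : RatFunc K) ^ ((r : ℤ) + c) * v ^ (-((r : ℤ) * (1 - c - (m : ℤ))))) •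
          (dp v Bi (r : ℤ) * Bt * dp v Bi ((m : ℤ) - (r : ℤ)))
      = ((-1 : RatFunc K) ^ ((m : ℤ) + c + 1) * qfact v (m - 1) *
          (v - v⁻¹) ^ ((m : ℤ) - 2) *
          v ^ (((m : ℤ) - 1) * ((m : ℤ) - 2 + 2 * c) / 2 + c)) •
            (dp v Bi ((m : ℤ) - 1) * ki) := by
  have hv0 : v ≠ 0 := by
    rw [hv]; exact pow_ne_zero _ RatFunc.X_ne_zero
  have hone : ∀ n : ℤ, n ≠ 0 → v ^ n ≠ 1 := by
    intro n hn
    rw [hv, ← zpow_natCast RatFunc.X ε, ← zpow_mul]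
    exact X_zpow_ne_one _ (mul_ne_zero (by exact_mod_cast hε.ne') hn)
  obtain ⟨k, hk⟩ : ∃ k : ℕ, m = (1-c).toNat + 1 + k := ⟨m - ((1-c).toNat + 1), by omega⟩
  have h := Ss_main hone hv0 Bi Bt ki kt c hc hki hkt hbkl k
  rw [← hk] at h
  have hL : (∑ r ∈ Finset.range (m + 1),
        ((-1 : RatFunc K) ^ ((r : ℤ) + c) * v ^ (-((r : ℤ) * (1 - c - (m : ℤ))))) •
          (dp v Bi (r : ℤ) * Bt * dp v Bi ((m : ℤ) - (r : ℤ))))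
      = Ss v Bi Bt c m := by
    rw [Ss]
    apply Finset.sum_congr rfl
    intro r _
    rw [show (-((r:ℤ) * (1 - c - (m:ℤ)))) = (r:ℤ)*((m:ℤ)+c-1) by ring]
  rw [hL, h, Cc]

/-- (Theorem 3.2, explicit form for e = −1.) Assuming the BKL relation, for m > 1−c:
∑_{r+s=m} (−1)^{r+c} q_i^{−r(1−c−m)} B_i^{(r)} B_{τi} B_i^{(s)}
= (−1)^{m+c+1} [m−1]! (q_i−q_i^{-1})^{m−2} q_i^{((m−1)(m−2+2c)/2)+c} B_i^{(m−1)} k̃_i. -/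
theorem stmt7 {K : Type*} [Field K] [CharZero K]
    {A : Type*} [Ring A] [Algebra (RatFunc K) A]
    (ε : ℕ) (hε : 0 < ε) (v : RatFunc K) (hv : v = RatFunc.X ^ ε)
    (Bi Bt ki kt : A) (c : ℤ) (hc : c ≤ 0)
    (hki : ki * Bi = v ^ (c - 2) • (Bi * ki))
    (hkt : kt * Bi = v ^ (2 - c) • (Bi * kt))
    (hbkl : BKL v Bi Bt ki kt c)
    (m : ℕ) (hm : 1 - c < (m : ℤ)) :
    ∑ r ∈ Finset.range (m + 1),
        ((-1 : RatFunc K) ^ ((r : ℤ) + c) * v ^ (-((r : ℤ) * (1 - c - (m : ℤ))))) •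
          (dp v Bi (r : ℤ) * Bt * dp v Bi ((m : ℤ) - (r : ℤ)))
      = ((-1 : RatFunc K) ^ ((m : ℤ) + c + 1) * qfact v (m - 1) *
          (v - v⁻¹) ^ ((m : ℤ) - 2) *
          v ^ (((m : ℤ) - 1) * ((m : ℤ) - 2 + 2 * c) / 2 + c)) •
            (dp v Bi ((m : ℤ) - 1) * ki) := by
  exact stmt7' ε hε v hv Bi Bt ki kt c hc hki hkt hbkl m hm
end
end
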